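/- arXiv:2411.02696 — 7 statements merged into one kernel-verified Lean document; each statement's English description precedes it below -/
import Mathlib

section
/- Let G be a finite abelian group and A ⊆ G. If the character χ_g associated to g ∈ G lies in the zero set Z_A of the Fourier transform of 1_A, then for any integer r coprime to |G|, the character χ_{rg} also lies in Z_A. -/
open Finset Polynomial

/-- If the character `χ = χ_g` lies in the zero set of the Fourier transform of `1_A`,
then so does `χ_{rg} = x ↦ χ (r • x)` for any integer `r` coprime to `|G|`. -/
theorem zero_set_mul_invariant {G : Type*} [AddCommGroup G] [Fintype G]
    (A : Finset G) (χ : AddChar G ℂ) (hχ : ∑ x ∈ A, χ x = 0)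
    (r : ℤ) (hr : Int.gcd r (Fintype.card G) = 1) :
    ∑ x ∈ A, χ (r • x) = 0 := by
  classical
  set n := Fintype.card G with hn
  have hn0 : 0 < n := Fintype.card_pos
  haveI : NeZero n := ⟨hn0.ne'⟩
  obtain ⟨ζ, hζ⟩ : ∃ ζ : ℂ, IsPrimitiveRoot ζ n :=
    ⟨_, Complex.isPrimitiveRoot_exp n hn0.ne'⟩
  -- every value of χ is an n-th root of unity
  have hroot : ∀ x : G, χ x ^ n = 1 := fun x => by
    rw [← AddChar.map_nsmul_eq_pow]
    simp [hn]
  choose k hk hkeq using fun x => hζ.eq_pow_of_pow_eq_one (hroot x)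
  -- reduce r mod n to a natural number s
  set s : ℕ := (r % (n : ℤ)).toNat with hs
  have hsr : (s : ℤ) = r % (n : ℤ) :=
    Int.toNat_of_nonneg (Int.emod_nonneg r (by exact_mod_cast hn0.ne'))
  have hcop : Nat.Coprime s n := by
    have h1 : IsCoprime (r : ℤ) ((n : ℕ) : ℤ) := Int.isCoprime_iff_gcd_eq_one.2 hr
    have h2 : IsCoprime ((s : ℤ)) ((n : ℕ) : ℤ) := by
      rw [hsr, Int.emod_def, sub_eq_add_neg, ← mul_neg]
      exact h1.add_mul_left_left _
    have h3 := Int.isCoprime_iff_gcd_eq_one.1 h2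
    simpa [Int.gcd_natCast_natCast] using h3
  -- the key polynomial
  set P : Polynomial ℚ := ∑ x ∈ A, X ^ k x with hP
  have hPζ : aeval ζ P = 0 := by
    rw [hP, map_sum]
    simpa [hkeq] using hχ
  have hdvd : minpoly ℚ ζ ∣ P := minpoly.dvd ℚ ζ hPζ
  have hprim : IsPrimitiveRoot (ζ ^ s) n := hζ.pow_of_coprime s hcop
  have hmin : minpoly ℚ (ζ ^ s) = minpoly ℚ ζ := by
    rw [← Polynomial.cyclotomic_eq_minpoly_rat hζ hn0,
      ← Polynomial.cyclotomic_eq_minpoly_rat hprim hn0]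
  have hPζs : aeval (ζ ^ s) P = 0 := by
    refine aeval_eq_zero_of_dvd_aeval_eq_zero (hmin ▸ hdvd) (minpoly.aeval ℚ (ζ ^ s))
  -- now rewrite the target sum as aeval (ζ ^ s) P
  have hpow : ∀ x : G, χ (r • x) = (ζ ^ s) ^ k x := by
    intro x
    have hne : χ x ≠ 0 := fun h0 => by
      have := hroot x
      rw [h0, zero_pow hn0.ne'] at this
      exact zero_ne_one this
    have : χ (r • x) = χ x ^ r := AddChar.map_zsmul_eq_zpow χ r x
    rw [this]
    calc χ x ^ r = χ x ^ ((s : ℤ) + (n : ℤ) * (r / (n : ℤ))) := by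
          rw [hsr]; congr 1; rw [Int.emod_add_mul_ediv]
      _ = χ x ^ (s : ℤ) * (χ x ^ (n : ℤ)) ^ (r / (n : ℤ)) := by
          rw [zpow_add₀ hne, zpow_mul]
      _ = χ x ^ s := by
          rw [show χ x ^ (n : ℤ) = 1 by exact_mod_cast hroot x]
          simp
      _ = (ζ ^ s) ^ k x := by
          rw [← hkeq x, ← pow_mul, ← pow_mul, Nat.mul_comm]
  calc ∑ x ∈ A, χ (r • x) = ∑ x ∈ A, (ζ ^ s) ^ k x := by
        exact Finset.sum_congr rfl fun x _ => hpow x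
    _ = aeval (ζ ^ s) P := by rw [hP, map_sum]; simp
    _ = 0 := hPζs
end

section
/- Let G be a finite abelian group and Ω, T ⊆ G. Then (Ω, T) is a tiling pair of G if and only if |Ω|·|T| = |G| and Z_Ω ∪ Z_T ⊇ G \ {0} (identifying Ĝ with G), where Z_A is the zero set of the Fourier transform of 1_A. -/
open Finset

/-- `(Ω, T)` is a tiling pair: every element of `G` has a unique representation
`ω + t` with `ω ∈ Ω`, `t ∈ T`. -/
def IsTilingPair {G : Type*} [AddCommGroup G] (Ω T : Finset G) : Prop :=
  ∀ g : G, ∃! x : G × G, x.1 ∈ Ω ∧ x.2 ∈ T ∧ x.1 + x.2 = g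

section Aux

variable {G : Type*} [AddCommGroup G] [Fintype G] [DecidableEq G] (Ω T : Finset G)

/-- The number of representations of `g` as `ω + t`. -/
private def repCount (g : G) : ℕ := ((Ω ×ˢ T).filter fun p => p.1 + p.2 = g).card

private lemma sum_repCount : ∑ g : G, repCount Ω T g = Ω.card * T.card := by
  unfold repCount
  rw [← Finset.card_product Ω T]
  rw [Finset.card_eq_sum_ones (Ω ×ˢ T),
    ← Finset.sum_fiberwise_of_maps_to (g := fun p : G × G => p.1 + p.2)
      (fun p _ => Finset.mem_univ _) (fun _ => 1)]
  simp

private lemma conv_sum (χ : AddChar G ℂ) :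
    ∑ g : G, (repCount Ω T g : ℂ) * χ g = (∑ x ∈ Ω, χ x) * (∑ x ∈ T, χ x) := by
  rw [Finset.sum_mul_sum, ← Finset.sum_product']
  rw [← Finset.sum_fiberwise_of_maps_to (g := fun p : G × G => p.1 + p.2)
      (fun p _ => Finset.mem_univ _) (fun p => χ p.1 * χ p.2)]
  refine Finset.sum_congr rfl fun g _ => ?_
  have : ∀ p ∈ (Ω ×ˢ T).filter fun p : G × G => p.1 + p.2 = g,
      χ p.1 * χ p.2 = χ g := by
    intro p hp
    rw [← AddChar.map_add_eq_mul, (Finset.mem_filter.1 hp).2]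
  rw [Finset.sum_congr rfl this, Finset.sum_const, nsmul_eq_mul]
  rfl

private lemma tiling_iff_repCount :
    IsTilingPair Ω T ↔ ∀ g : G, repCount Ω T g = 1 := by
  unfold IsTilingPair repCount
  have hmem : ∀ (g : G) (p : G × G),
      p ∈ (Ω ×ˢ T).filter (fun p : G × G => p.1 + p.2 = g) ↔
        (p.1 ∈ Ω ∧ p.2 ∈ T ∧ p.1 + p.2 = g) := by
    intro g p
    simp [Finset.mem_filter, Finset.mem_product, and_assoc]
  constructor
  · intro h g
    obtain ⟨x, hx, hu⟩ := h g
    rw [Finset.card_eq_one]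
    exact ⟨x, Finset.eq_singleton_iff_unique_mem.2
      ⟨(hmem g x).2 hx, fun y hy => hu y ((hmem g y).1 hy)⟩⟩
  · intro h g
    obtain ⟨x, hx⟩ := Finset.card_eq_one.1 (h g)
    refine ⟨x, (hmem g x).1 (hx ▸ Finset.mem_singleton_self x), fun y hy => ?_⟩
    have := (hmem g y).2 hy
    rw [hx] at this
    exact Finset.mem_singleton.1 this

end Aux

/-- `(Ω, T)` is a tiling pair iff `|Ω|·|T| = |G|` and every nontrivial character
(i.e. every element of `Ĝ \ {0}`, identifying `Ĝ` with `G`) lies in `Z_Ω ∪ Z_T`. -/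
theorem isTilingPair_iff_zeros {G : Type*} [AddCommGroup G] [Fintype G]
    (Ω T : Finset G) :
    IsTilingPair Ω T ↔
      Ω.card * T.card = Fintype.card G ∧
        ∀ χ : AddChar G ℂ, χ ≠ 1 →
          (∑ x ∈ Ω, χ x = 0 ∨ ∑ x ∈ T, χ x = 0) := by
  classical
  rw [tiling_iff_repCount]
  constructor
  · intro h
    constructor
    · rw [← sum_repCount Ω T, Finset.sum_congr rfl fun g _ => h g]
      simp
    · intro χ hχ
      have hχ0 : χ ≠ 0 := hχ
      have h0 : (∑ x ∈ Ω, χ x) * (∑ x ∈ T, χ x) = 0 := by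
        rw [← conv_sum Ω T χ]
        rw [Finset.sum_congr rfl fun g _ => by rw [h g]]
        simpa using AddChar.sum_eq_zero_iff_ne_zero.2 hχ0
      exact mul_eq_zero.1 h0
  · rintro ⟨hc, hz⟩ g
    -- Fourier inversion
    have hGnz : (Fintype.card G : ℂ) ≠ 0 := Nat.cast_ne_zero.2 Fintype.card_ne_zero
    have key : (repCount Ω T g : ℂ) * (Fintype.card G : ℂ) = (Fintype.card G : ℂ) := by
      have lhs : ∑ χ : AddChar G ℂ, (∑ g' : G, (repCount Ω T g' : ℂ) * χ g') * χ (-g)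
          = (repCount Ω T g : ℂ) * (Fintype.card G : ℂ) := by
        simp_rw [Finset.sum_mul]
        rw [Finset.sum_comm]
        have inner : ∀ g' : G,
            ∑ χ : AddChar G ℂ, (repCount Ω T g' : ℂ) * χ g' * χ (-g)
              = (repCount Ω T g' : ℂ) * (if g' - g = 0 then (Fintype.card G : ℂ) else 0) := by
          intro g'
          rw [← AddChar.sum_apply_eq_ite (g' - g), Finset.mul_sum]
          refine Finset.sum_congr rfl fun χ _ => ?_
          rw [mul_assoc, ← AddChar.map_add_eq_mul, sub_eq_add_neg]
        calc ∑ g' : G, ∑ χ : AddChar G ℂ, (repCount Ω T g' : ℂ) * χ g' * χ (-g)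
            = ∑ g' : G, (repCount Ω T g' : ℂ) *
                (if g' - g = 0 then (Fintype.card G : ℂ) else 0) :=
              Finset.sum_congr rfl fun g' _ => inner g'
          _ = (repCount Ω T g : ℂ) * (Fintype.card G : ℂ) := by
              rw [Finset.sum_eq_single g]
              · simp
              · intro b _ hb
                rw [if_neg (sub_ne_zero.2 hb), mul_zero]
              · simp
      have rhs : ∑ χ : AddChar G ℂ, (∑ g' : G, (repCount Ω T g' : ℂ) * χ g') * χ (-g)
          = (Fintype.card G : ℂ) := by
        rw [Fintype.sum_eq_single (1 : AddChar G ℂ)]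
        · rw [conv_sum]
          simp only [AddChar.one_apply, mul_one, Finset.sum_const, nsmul_eq_mul]
          push_cast [← hc]
          ring
        · intro χ hχ
          rw [conv_sum]
          rcases hz χ hχ with h | h <;> rw [h] <;> ring
      rw [← lhs, rhs]
    have h1 : (repCount Ω T g : ℂ) * (Fintype.card G : ℂ)
        = 1 * (Fintype.card G : ℂ) := by rw [key, one_mul]
    have : (repCount Ω T g : ℂ) = 1 := mul_right_cancel₀ hGnz h1
    exact_mod_cast this
end

section
/- If (Ω, T) is a tiling pair of a finite abelian group G and k is an integer coprime to |T|, then (Ω, kT) is also a tiling pair, where kT = {kt : t ∈ T}. -/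
open Finset

section Aux

variable {G : Type*} [AddCommGroup G] [Fintype G] [DecidableEq G]

set_option linter.unusedSectionVars false

/-- The number of representations `g = ω + k • t` with `ω ∈ Ω`, `t ∈ T`. -/
def Nrep (Ω T : Finset G) (k : ℕ) (g : G) : ℕ :=
  ((Ω ×ˢ T).filter (fun x => x.1 + k • x.2 = g)).card

lemma nrep_one_of_tiling {Ω T : Finset G} (h : IsTilingPair Ω T) (g : G) :
    Nrep Ω T 1 g = 1 := by
  obtain ⟨x, hx, hu⟩ := h g
  rw [Nrep, Finset.card_eq_one]
  refine ⟨x, ?_⟩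
  ext y
  simp only [Finset.mem_filter, Finset.mem_product, Finset.mem_singleton, one_smul]
  constructor
  · rintro ⟨⟨h1, h2⟩, h3⟩; exact hu y ⟨h1, h2, h3⟩
  · rintro rfl; exact ⟨⟨hx.1, hx.2.1⟩, by simpa using hx.2.2⟩

lemma sum_nrep (Ω T : Finset G) (k : ℕ) :
    ∑ g : G, Nrep Ω T k g = Ω.card * T.card := by
  rw [← Finset.card_product Ω T]
  exact (Finset.card_eq_sum_card_fiberwise
    (f := fun x : G × G => x.1 + k • x.2) (fun x _ => Finset.mem_univ _)).symm

lemma nonempty_of_nrep {Ω T : Finset G} {k : ℕ} (h : ∀ g, Nrep Ω T k g = 1) :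
    Ω.Nonempty ∧ T.Nonempty := by
  have h0 := h 0
  rw [Nrep, Finset.card_eq_one] at h0
  obtain ⟨x, hx⟩ := h0
  have : x ∈ (Ω ×ˢ T).filter (fun x => x.1 + k • x.2 = (0 : G)) := by
    rw [hx]; exact Finset.mem_singleton_self x
  rw [Finset.mem_filter, Finset.mem_product] at this
  exact ⟨⟨x.1, this.1.1⟩, ⟨x.2, this.1.2⟩⟩

lemma tiling_of_nrep {Ω T : Finset G} {k : ℕ} (h : ∀ g, Nrep Ω T k g = 1) :
    IsTilingPair Ω (T.image (fun t => k • t)) := by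
  intro g
  have hg := h g
  rw [Nrep, Finset.card_eq_one] at hg
  obtain ⟨x, hx⟩ := hg
  have hxmem : x ∈ (Ω ×ˢ T).filter (fun x => x.1 + k • x.2 = g) := by
    rw [hx]; exact Finset.mem_singleton_self x
  rw [Finset.mem_filter, Finset.mem_product] at hxmem
  refine ⟨(x.1, k • x.2), ⟨hxmem.1.1, Finset.mem_image_of_mem _ hxmem.1.2, hxmem.2⟩, ?_⟩
  rintro ⟨y1, s⟩ ⟨hy1, hs, hsum⟩
  obtain ⟨t', ht', rfl⟩ := Finset.mem_image.mp hs
  have : (y1, t') ∈ (Ω ×ˢ T).filter (fun x => x.1 + k • x.2 = g) := by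
    rw [Finset.mem_filter, Finset.mem_product]
    exact ⟨⟨hy1, ht'⟩, hsum⟩
  rw [hx, Finset.mem_singleton] at this
  rw [show y1 = x.1 from congrArg Prod.fst this,
    show t' = x.2 from congrArg Prod.snd this]

lemma injOn_of_nrep {Ω T : Finset G} {k : ℕ} (h : ∀ g, Nrep Ω T k g = 1)
    (hΩ : Ω.Nonempty) : Set.InjOn (fun t => k • t) (T : Set G) := by
  intro t ht t' ht' htt
  obtain ⟨w, hw⟩ := hΩ
  have hg := h (w + k • t)
  rw [Nrep, Finset.card_eq_one] at hg
  obtain ⟨x, hx⟩ := hg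
  have h1 : (w, t) ∈ (Ω ×ˢ T).filter (fun x => x.1 + k • x.2 = w + k • t) := by
    rw [Finset.mem_filter, Finset.mem_product]; exact ⟨⟨hw, ht⟩, rfl⟩
  have h2 : (w, t') ∈ (Ω ×ˢ T).filter (fun x => x.1 + k • x.2 = w + k • t) := by
    rw [Finset.mem_filter, Finset.mem_product]
    exact ⟨⟨hw, ht'⟩, by simp [← htt]⟩
  rw [hx, Finset.mem_singleton] at h1 h2
  have := h1.trans h2.symm
  exact congrArg Prod.snd this

lemma nrep_image (Ω T : Finset G) (a b : ℕ) (hinj : Set.InjOn (fun t => a • t) (T : Set G)) (g : G) :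
    Nrep Ω (T.image (fun t => a • t)) b g = Nrep Ω T (b * a) g := by
  rw [Nrep, Nrep]
  refine (Finset.card_bij (fun x _ => (x.1, a • x.2)) ?_ ?_ ?_).symm
  · intro x hx
    rw [Finset.mem_filter, Finset.mem_product] at hx ⊢
    refine ⟨⟨hx.1.1, Finset.mem_image_of_mem _ hx.1.2⟩, ?_⟩
    rw [smul_smul]; exact hx.2
  · intro x hx y hy hxy
    rw [Finset.mem_filter, Finset.mem_product] at hx hy
    have hxy' : (x.1, a • x.2) = (y.1, a • y.2) := hxy
    have h1 : x.1 = y.1 := (Prod.ext_iff.mp hxy').1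
    have h2 : a • x.2 = a • y.2 := (Prod.ext_iff.mp hxy').2
    exact Prod.ext h1 (hinj hx.1.2 hy.1.2 h2)
  · intro y hy
    rw [Finset.mem_filter, Finset.mem_product] at hy
    obtain ⟨t, ht, hat⟩ := Finset.mem_image.mp hy.1.2
    refine ⟨(y.1, t), ?_, ?_⟩
    · rw [Finset.mem_filter, Finset.mem_product]
      refine ⟨⟨hy.1.1, ht⟩, ?_⟩
      rw [mul_smul, hat]; exact hy.2
    · simp [hat]

lemma coeff_sum {p : ℕ} [NeZero p] {ι : Type*} [DecidableEq ι] (S : Finset ι) (a : ι → G) (g : G) :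
    (∑ i ∈ S, (AddMonoidAlgebra.single (a i) 1 : AddMonoidAlgebra (ZMod p) G)).coeff g
      = ((S.filter (fun i => a i = g)).card : ZMod p) := by
  rw [AddMonoidAlgebra.coeff_sum, Finset.sum_apply', Finset.card_filter, Nat.cast_sum]
  refine Finset.sum_congr rfl fun i _ => ?_
  rw [AddMonoidAlgebra.coeff_single, Finsupp.single_apply]
  by_cases h : a i = g <;> simp [h]

lemma nrep_prime_zmod {Ω T : Finset G} {p : ℕ} (hp : p.Prime) (hpT : ¬ p ∣ T.card)
    (h1 : ∀ g, Nrep Ω T 1 g = 1) (g : G) : (Nrep Ω T p g : ZMod p) = 1 := by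
  haveI : Fact p.Prime := ⟨hp⟩
  haveI : CharP (AddMonoidAlgebra (ZMod p) G) p := charP_of_injective_ringHom
    (R := ZMod p) (f := AddMonoidAlgebra.singleZeroRingHom)
    (fun x y hxy => by
      have := congrArg (fun f : AddMonoidAlgebra (ZMod p) G => f.coeff (0 : G)) hxy
      simpa [AddMonoidAlgebra.singleZeroRingHom] using this) p
  set e : G → AddMonoidAlgebra (ZMod p) G := fun g => AddMonoidAlgebra.single g 1 with he
  have hee : ∀ a b : G, e a * e b = e (a + b) := fun a b => by
    rw [he]; simp only []; rw [AddMonoidAlgebra.single_mul_single, one_mul]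
  set What : AddMonoidAlgebra (ZMod p) G := ∑ w ∈ Ω, e w with hW
  set That : AddMonoidAlgebra (ZMod p) G := ∑ t ∈ T, e t with hT
  set Ghat : AddMonoidAlgebra (ZMod p) G := ∑ g : G, e g with hG
  have key1 : What * That = Ghat := by
    rw [hW, hT, Finset.sum_mul_sum, hG]
    refine AddMonoidAlgebra.coeff_injective (Finsupp.ext fun g' => ?_)
    have hrw : (∑ w ∈ Ω, ∑ t ∈ T, e w * e t) = ∑ x ∈ Ω ×ˢ T, e (x.1 + x.2) := by
      rw [Finset.sum_product]
      exact Finset.sum_congr rfl fun w _ => Finset.sum_congr rfl fun t _ => hee w t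
    rw [hrw, he]
    rw [coeff_sum, coeff_sum]
    have hl : ((Ω ×ˢ T).filter (fun x => x.1 + x.2 = g')).card = 1 := by
      have := h1 g'; simpa [Nrep, one_smul] using this
    have hr : (Finset.univ.filter (fun h : G => h = g')).card = 1 := by
      simp [Finset.filter_eq']
    rw [hl, hr]
  have key2 : ∀ t : G, Ghat * e t = Ghat := by
    intro t
    rw [hG, Finset.sum_mul]
    simp only [hee]
    exact Fintype.sum_equiv (Equiv.addRight t) _ _ (fun x => rfl)
  have key2' : Ghat * That = (T.card : ZMod p) • Ghat := by
    rw [hT, Finset.mul_sum]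
    simp only [key2]
    rw [Finset.sum_const]
    exact (Nat.cast_smul_eq_nsmul (ZMod p) _ _).symm
  have key3 : ∀ m : ℕ, Ghat * That ^ m = ((T.card : ZMod p)) ^ m • Ghat := by
    intro m
    induction m with
    | zero => simp
    | succ n ih =>
      rw [pow_succ, ← mul_assoc, ih, smul_mul_assoc, key2', smul_smul, ← pow_succ]
  have key4 : That ^ p = ∑ t ∈ T, e (p • t) := by
    rw [hT, sum_pow_char]
    refine Finset.sum_congr rfl fun t _ => ?_
    rw [he]; simp only []
    rw [AddMonoidAlgebra.single_pow, one_pow]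
  have hcard : ((T.card : ZMod p)) ^ (p - 1) = 1 := by
    apply ZMod.pow_card_sub_one_eq_one
    rwa [Ne, ZMod.natCast_eq_zero_iff]
  have key5 : What * (∑ t ∈ T, e (p • t)) = Ghat := by
    rw [← key4]
    have h2le := hp.two_le
    have hsplit : That ^ p = That * That ^ (p - 1) := by
      rw [← pow_succ']
      congr 1
      omega
    rw [hsplit, ← mul_assoc, key1, key3, hcard, one_smul]
  have hlhs : (What * (∑ t ∈ T, e (p • t))).coeff g = (Nrep Ω T p g : ZMod p) := by
    have hrw : What * (∑ t ∈ T, e (p • t)) = ∑ x ∈ Ω ×ˢ T, e (x.1 + p • x.2) := by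
      rw [hW, Finset.sum_mul_sum, Finset.sum_product]
      exact Finset.sum_congr rfl fun w _ => Finset.sum_congr rfl fun t _ => hee w _
    rw [hrw, he, coeff_sum, Nrep]
  have hrhs : Ghat.coeff g = 1 := by
    rw [hG, he, coeff_sum]
    simp [Finset.filter_eq']
  rw [← hlhs, key5]
  exact hrhs

lemma nrep_prime {Ω T : Finset G} {p : ℕ} (hp : p.Prime) (hpT : ¬ p ∣ T.card)
    (h1 : ∀ g, Nrep Ω T 1 g = 1) (g : G) : Nrep Ω T p g = 1 := by
  haveI : Fact p.Prime := ⟨hp⟩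
  have hz := fun g => nrep_prime_zmod hp hpT h1 g
  have hge : ∀ g : G, 1 ≤ Nrep Ω T p g := by
    intro g
    rcases Nat.eq_zero_or_pos (Nrep Ω T p g) with h0 | h
    · exfalso
      have := hz g
      rw [h0] at this
      simp at this
    · exact h
  have hsum : ∑ g : G, (1 : ℕ) = ∑ g : G, Nrep Ω T p g := by
    rw [sum_nrep]
    have hG1 : Fintype.card G = Ω.card * T.card := by
      have := sum_nrep Ω T 1
      rw [← this]
      simp [h1]
    simpa using hG1
  have := (Finset.sum_eq_sum_iff_of_le (fun i _ => hge i)).mp hsum g (Finset.mem_univ g)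
  exact this.symm

lemma main_nat : ∀ (k : ℕ), 0 < k → ∀ (T : Finset G) (Ω : Finset G),
    (∀ g, Nrep Ω T 1 g = 1) → Nat.gcd k T.card = 1 → ∀ g, Nrep Ω T k g = 1 := by
  intro k
  induction k using Nat.strong_induction_on with
  | _ k ih =>
    intro hk T Ω h1 hgcd g
    rcases eq_or_ne k 1 with rfl | hk1
    · exact h1 g
    · have hk2 : 2 ≤ k := by omega
      set p := k.minFac with hp
      have hpp : p.Prime := Nat.minFac_prime hk1
      have hpd : p ∣ k := Nat.minFac_dvd k
      obtain ⟨m, hm⟩ := hpd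
      have hm0 : 0 < m := by
        rcases Nat.eq_zero_or_pos m with h0 | h
        · subst h0; simp at hm; omega
        · exact h
      have hmk : m < k := by
        have := hpp.two_le
        calc m < p * m := by nlinarith
          _ = k := hm.symm
      have hpT : ¬ p ∣ T.card := by
        intro hdvd
        have : p ∣ Nat.gcd k T.card := Nat.dvd_gcd ⟨m, hm⟩ hdvd
        rw [hgcd] at this
        exact hpp.one_lt.ne' (Nat.dvd_one.mp this)
      have hNp : ∀ g, Nrep Ω T p g = 1 := nrep_prime hpp hpT h1
      have hΩne : Ω.Nonempty := (nonempty_of_nrep hNp).1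
      have hinj : Set.InjOn (fun t => p • t) (T : Set G) := injOn_of_nrep hNp hΩne
      set T' := T.image (fun t => p • t) with hT'
      have hT'card : T'.card = T.card := Finset.card_image_of_injOn hinj
      have h1' : ∀ g, Nrep Ω T' 1 g = 1 := by
        intro g
        rw [hT', nrep_image Ω T p 1 hinj, one_mul]
        exact hNp g
      have hgcd' : Nat.gcd m T'.card = 1 := by
        rw [hT'card]
        have : Nat.gcd m T.card ∣ Nat.gcd k T.card :=
          Nat.dvd_gcd ((Nat.gcd_dvd_left m T.card).trans ⟨p, by rw [hm, mul_comm]⟩)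
            (Nat.gcd_dvd_right m T.card)
        rw [hgcd] at this
        exact Nat.dvd_one.mp this
      have hNm : ∀ g, Nrep Ω T' m g = 1 := ih m hmk hm0 T' Ω h1' hgcd'
      have := hNm g
      rw [hT', nrep_image Ω T p m hinj] at this
      rw [show k = m * p by rw [hm, mul_comm]]
      exact this

end Aux

/-- If `(Ω, T)` is a tiling pair and `k` is coprime to `|T|`, then `(Ω, kT)`
is a tiling pair. -/
theorem isTilingPair_smul {G : Type*} [AddCommGroup G] [Fintype G] [DecidableEq G]
    (Ω T : Finset G) (hΩT : IsTilingPair Ω T)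
    (k : ℤ) (hk : Int.gcd k T.card = 1) :
    IsTilingPair Ω (T.image fun t => k • t) := by
  have h1 : ∀ g, Nrep Ω T 1 g = 1 := nrep_one_of_tiling hΩT
  have hTne : T.Nonempty := (nonempty_of_nrep h1).2
  set M : ℕ := Fintype.card G * T.card with hM
  have hM0 : 0 < M := Nat.mul_pos Fintype.card_pos hTne.card_pos
  set n : ℕ := (k % (M : ℤ) + M).toNat with hn
  have hMne : (M : ℤ) ≠ 0 := by exact_mod_cast hM0.ne'
  have hmod : 0 ≤ k % (M : ℤ) := Int.emod_nonneg k hMne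
  have hncast : (n : ℤ) = k % (M : ℤ) + M := by
    rw [hn, Int.toNat_of_nonneg (by positivity)]
  have hn0 : 0 < n := by
    have : (0 : ℤ) < (n : ℤ) := by rw [hncast]; positivity
    exact_mod_cast this
  have hdvd : (M : ℤ) ∣ k - n := by
    rw [hncast]
    have : k - (k % (M : ℤ) + M) = (M : ℤ) * (k / M) - M := by
      rw [Int.emod_def]; ring
    rw [this]
    exact dvd_sub (Dvd.intro _ rfl) (dvd_refl _)
  -- k • t = n • t for all t
  have hsmul : ∀ t : G, k • t = (n : ℕ) • t := by
    intro t
    have hMt : (M : ℤ) • t = 0 := by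
      rw [natCast_zsmul, hM, mul_smul, card_nsmul_eq_zero]
    obtain ⟨c, hc⟩ := hdvd
    have : (k - n) • t = 0 := by
      rw [hc, mul_comm, mul_smul, hMt, smul_zero]
    have h2 : k • t - (n : ℤ) • t = 0 := by rw [← sub_smul]; exact this
    have h3 : k • t = (n : ℤ) • t := sub_eq_zero.mp h2
    rw [h3, natCast_zsmul]
  have himg : (T.image fun t => k • t) = T.image (fun t => n • t) :=
    Finset.image_congr (fun t _ => hsmul t)
  have hgcdn : Nat.gcd n T.card = 1 := by
    have hco : IsCoprime k (T.card : ℤ) := Int.isCoprime_iff_gcd_eq_one.mpr hk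
    have hTdvdM : (T.card : ℤ) ∣ (M : ℤ) := by
      exact_mod_cast Int.natCast_dvd_natCast.mpr ⟨Fintype.card G, by rw [hM, mul_comm]⟩
    obtain ⟨c, hc⟩ := hdvd
    obtain ⟨d, hd⟩ := hTdvdM
    have hn' : (n : ℤ) = k + (T.card : ℤ) * (-(d * c)) := by
      have : (n : ℤ) = k - (M : ℤ) * c := by linarith [hc]
      rw [this, hd]; ring
    have : IsCoprime ((n : ℤ)) ((T.card : ℤ)) := by
      rw [hn']
      exact hco.add_mul_left_left _
    have := Int.isCoprime_iff_gcd_eq_one.mp this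
    rwa [Int.gcd_natCast_natCast] at this
  rw [himg]
  exact tiling_of_nrep (main_nat n hn0 T Ω h1 hgcdn)
end

section
/- Let p be a prime, n ≥ 1, and b_0, b_1, …, b_{p−1} integers with ∑_{j=0}^{p−1} e^{2πi b_j / p^n} = 0. Then there exist an integer r with 0 ≤ r ≤ p^{n−1} − 1 and a permutation σ of {0,…,p−1} such that b_{σ(j)} ≡ r + j·p^{n−1} (mod p^n) for all j = 0, 1, …, p − 1. -/
open Finset Complex

/-- If `p` of the `p^n`-th roots of unity sum to zero, then the exponents, modulo
`p^n` and up to a permutation, form a coset `r + p^{n-1}·{0, 1, …, p-1}`. -/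
theorem exponents_form_coset (p n : ℕ) (hp : p.Prime) (hn : 1 ≤ n)
    (b : Fin p → ℤ)
    (h : ∑ j, Complex.exp (2 * Real.pi * Complex.I * (b j) / (p ^ n : ℕ)) = 0) :
    ∃ r : ℕ, r < p ^ (n - 1) ∧ ∃ σ : Equiv.Perm (Fin p),
      ∀ j : Fin p, b (σ j) ≡ (r : ℤ) + (j : ℤ) * (p : ℤ) ^ (n - 1) [ZMOD (p ^ n : ℕ)] := by
  classical
  set N : ℕ := p ^ n with hNdef
  set q : ℕ := p ^ (n - 1) with hqdef
  have hq0 : 0 < q := pow_pos hp.pos _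
  have hN0 : 0 < N := pow_pos hp.pos _
  have hNq : N = q * p := by
    rw [hNdef, hqdef, ← pow_succ, Nat.sub_add_cancel hn]
  have hNZ : (0:ℤ) < (N:ℤ) := by exact_mod_cast hN0
  clear_value N q
  -- reduced exponents
  set m : Fin p → ℕ := fun j => ((b j) % (N : ℤ)).toNat with hmdef
  have hbm : ∀ j, (m j : ℤ) = b j % (N:ℤ) := fun j =>
    Int.toNat_of_nonneg (Int.emod_nonneg _ hNZ.ne')
  have hmN : ∀ j, m j < N := by
    intro j
    have h1 := Int.emod_lt_of_pos (b j) hNZ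
    have h2 := hbm j
    omega
  -- primitive root
  set ζ : ℂ := Complex.exp (2 * Real.pi * Complex.I / N) with hζdef
  have hζ : IsPrimitiveRoot ζ N := Complex.isPrimitiveRoot_exp N hN0.ne'
  have hζN : ζ ^ (N:ℤ) = 1 := by
    rw [zpow_natCast]; exact hζ.pow_eq_one
  have hsum : ∑ j, ζ ^ (m j) = 0 := by
    rw [← h]
    refine Finset.sum_congr rfl fun j _ => ?_
    have e1 : ζ ^ b j = Complex.exp (2 * Real.pi * Complex.I * (b j) / N) := by
      rw [hζdef, ← Complex.exp_int_mul]
      congr 1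
      ring
    have e2 : ζ ^ (m j : ℤ) = ζ ^ b j := by
      have : b j = (N:ℤ) * (b j / N) + b j % N := (Int.mul_ediv_add_emod _ _).symm
      rw [hbm j]
      conv_rhs => rw [this]
      rw [zpow_add₀ (Complex.exp_ne_zero _) , zpow_mul, hζN, one_zpow, one_mul]
    rw [← zpow_natCast ζ (m j), e2, e1]
  -- the polynomial
  set f : Polynomial ℤ := ∑ j, Polynomial.X ^ (m j) with hfdef
  have hfζ : Polynomial.aeval ζ f = 0 := by
    rw [hfdef, map_sum]
    simpa using hsum
  have hcoefff : ∀ t, f.coeff t = ((univ.filter fun j => m j = t).card : ℤ) := by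
    intro t
    rw [hfdef, Polynomial.finset_sum_coeff]
    rw [Finset.card_filter]
    push_cast
    refine Finset.sum_congr rfl fun j _ => ?_
    rw [Polynomial.coeff_X_pow]
    simp [eq_comm]
  have hf1 : f.eval 1 = (p:ℤ) := by
    rw [hfdef, Polynomial.eval_finset_sum]
    simp
  have hfne : f ≠ 0 := by
    intro h0
    rw [h0, Polynomial.eval_zero] at hf1
    have : p = 0 := by exact_mod_cast hf1.symm
    exact hp.ne_zero this
  have hdegf : f.degree < (N : ℕ) := by
    rw [hfdef]
    refine lt_of_le_of_lt (Polynomial.degree_sum_le _ _) ?_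
    rw [Finset.sup_lt_iff (by exact_mod_cast WithBot.bot_lt_coe N)]
    intro j _
    rw [Polynomial.degree_X_pow]
    exact_mod_cast hmN j
  -- cyclotomic divides f
  have hcyc : Polynomial.cyclotomic N ℤ ∣ f := by
    rw [← Polynomial.map_dvd_map (Int.castRingHom ℚ) Int.cast_injective
      (Polynomial.cyclotomic.monic N ℤ), Polynomial.map_cyclotomic_int,
      Polynomial.cyclotomic_eq_minpoly_rat hζ hN0]
    apply minpoly.dvd ℚ ζ
    have : Polynomial.map (Int.castRingHom ℚ) f = Polynomial.map (algebraMap ℤ ℚ) f := rfl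
    rw [this, Polynomial.aeval_map_algebraMap]
    exact hfζ
  obtain ⟨g, hfg⟩ := hcyc
  have hΦ : Polynomial.cyclotomic N ℤ = ∑ i ∈ range p, (Polynomial.X : Polynomial ℤ) ^ (q * i) := by
    have h1 := Polynomial.cyclotomic_prime_pow_eq_geom_sum (R := ℤ) hp (n := n - 1)
    rw [Nat.sub_add_cancel hn] at h1
    rw [hNdef, h1]
    refine Finset.sum_congr rfl fun i _ => ?_
    rw [← pow_mul, hqdef]
  have hgne : g ≠ 0 := by
    intro h0
    rw [h0, mul_zero] at hfg
    exact hfne hfg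
  have hΦne : Polynomial.cyclotomic N ℤ ≠ 0 := Polynomial.cyclotomic_ne_zero N ℤ
  have hdegΦ : (Polynomial.cyclotomic N ℤ).natDegree = q * (p - 1) := by
    rw [Polynomial.natDegree_cyclotomic, hNdef, Nat.totient_prime_pow hp hn, ← hqdef]
  have hdegg : g.natDegree < q := by
    have h1 : f.natDegree < N := (Polynomial.natDegree_lt_iff_degree_lt hfne).mpr hdegf
    have h2 : f.natDegree = q * (p - 1) + g.natDegree := by
      rw [hfg, Polynomial.natDegree_mul hΦne hgne, hdegΦ]
    have h3 : q * p = q * (p - 1) + q := by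
      conv_lhs => rw [← Nat.sub_add_cancel hp.one_le]
      ring
    omega
  -- key coefficient identity
  have hkey : ∀ t, t < N → f.coeff t = g.coeff (t % q) := by
    intro t ht
    have htq : t / q < p := by
      rw [Nat.div_lt_iff_lt_mul hq0]
      have : N = p * q := by rw [hNq, mul_comm]
      omega
    rw [hfg, hΦ, Finset.sum_mul, Polynomial.finset_sum_coeff]
    have hterm : ∀ i ∈ range p, (Polynomial.X ^ (q * i) * g).coeff t
        = if i = t / q then g.coeff (t % q) else 0 := by
      intro i _
      rw [Polynomial.X_pow_mul, Polynomial.coeff_mul_X_pow']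
      have hmod := Nat.mod_add_div t q
      have hmodlt : t % q < q := Nat.mod_lt _ hq0
      rcases lt_trichotomy i (t / q) with hi | hi | hi
      · have h5 : q * i + q ≤ q * (t / q) := by
          have h6 : i + 1 ≤ t / q := hi
          calc q * i + q = q * (i + 1) := by ring
            _ ≤ q * (t / q) := Nat.mul_le_mul_left q h6
        have hle : q * i ≤ t := by omega
        rw [if_pos hle, if_neg (by omega)]
        exact Polynomial.coeff_eq_zero_of_natDegree_lt (by omega)
      · subst hi
        have hle : q * (t / q) ≤ t := by omega
        rw [if_pos hle, if_pos rfl]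
        congr 1
        omega
      · have h5 : q * (t / q) + q ≤ q * i := by
          have h6 : t / q + 1 ≤ i := hi
          calc q * (t / q) + q = q * (t / q + 1) := by ring
            _ ≤ q * i := Nat.mul_le_mul_left q h6
        have hgt : ¬ (q * i ≤ t) := by omega
        rw [if_neg hgt, if_neg (by omega)]
    rw [Finset.sum_congr rfl hterm, Finset.sum_ite_eq' (range p) (t / q)]
    rw [if_pos (Finset.mem_range.mpr htq)]
  -- g has nonnegative coefficients
  have hgnonneg : ∀ a, 0 ≤ g.coeff a := by
    intro a
    by_cases ha : a < q
    · have haN : a < N := lt_of_lt_of_le ha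
        (by rw [hNq]; exact Nat.le_mul_of_pos_right q hp.pos)
      have : g.coeff a = f.coeff a := by
        rw [hkey a haN, Nat.mod_eq_of_lt ha]
      rw [this, hcoefff]
      positivity
    · rw [Polynomial.coeff_eq_zero_of_natDegree_lt (by omega)]
  -- g.eval 1 = 1
  have hΦ1 : (Polynomial.cyclotomic N ℤ).eval 1 = (p:ℤ) := by
    rw [hΦ, Polynomial.eval_finset_sum]
    simp
  have hg1 : g.eval 1 = 1 := by
    have h1 := congrArg (Polynomial.eval 1) hfg
    rw [hf1, Polynomial.eval_mul, hΦ1] at h1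
    have hp0 : (p:ℤ) ≠ 0 := by exact_mod_cast hp.ne_zero
    exact (mul_left_cancel₀ hp0 (by rw [mul_one, ← h1]) : (1:ℤ) = g.eval 1).symm
  -- find the unique nonzero coefficient r of g
  have hsumg : ∑ a ∈ range (g.natDegree + 1), g.coeff a = 1 := by
    have := Polynomial.eval_eq_sum_range (p := g) (1 : ℤ)
    simp only [one_pow, mul_one] at this
    rw [hg1] at this
    exact this.symm
  obtain ⟨r, hrmem, hrne⟩ : ∃ a ∈ range (g.natDegree + 1), g.coeff a ≠ 0 := by
    by_contra hc
    push_neg at hc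
    rw [Finset.sum_eq_zero hc] at hsumg
    exact one_ne_zero hsumg.symm
  have hrq : r < q := lt_of_le_of_lt (Polynomial.le_natDegree_of_ne_zero hrne) hdegg
  have hsplit := Finset.add_sum_erase _ g.coeff hrmem
  have herasenn : 0 ≤ ∑ a ∈ (range (g.natDegree + 1)).erase r, g.coeff a :=
    Finset.sum_nonneg fun a _ => hgnonneg a
  have hr1 : g.coeff r = 1 := by
    have : 1 ≤ g.coeff r := by
      have := hgnonneg r
      omega
    omega
  have herase0 : ∀ a ∈ (range (g.natDegree + 1)).erase r, g.coeff a = 0 := by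
    rw [← Finset.sum_eq_zero_iff_of_nonneg fun a _ => hgnonneg a]
    omega
  have hrcoeff : ∀ a, a ≠ r → g.coeff a = 0 := by
    intro a ha
    by_cases hmem : a ∈ range (g.natDegree + 1)
    · exact herase0 a (Finset.mem_erase.mpr ⟨ha, hmem⟩)
    · rw [Finset.mem_range] at hmem
      exact Polynomial.coeff_eq_zero_of_natDegree_lt (by omega)
  -- coefficients of f
  have hfcoeff : ∀ t < N, ((univ.filter fun j => m j = t).card : ℤ)
      = if t % q = r then 1 else 0 := by
    intro t ht
    rw [← hcoefff, hkey t ht]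
    split_ifs with h'
    · rw [h', hr1]
    · exact hrcoeff _ h'
  -- each m j lies in the coset
  have hmr : ∀ j, m j % q = r := by
    intro j
    by_contra hne
    have h1 := hfcoeff (m j) (hmN j)
    rw [if_neg hne] at h1
    have h2 : (univ.filter fun i => m i = m j).card = 0 := by exact_mod_cast h1
    have h3 : j ∈ univ.filter fun i => m i = m j := by simp
    have h4 := Finset.card_pos.mpr ⟨j, h3⟩
    omega
  have hminj : Function.Injective m := by
    intro j j' hjj
    have h1 := hfcoeff (m j) (hmN j)
    rw [if_pos (hmr j)] at h1
    have hcard : (univ.filter fun i => m i = m j).card = 1 := by exact_mod_cast h1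
    have hj : j ∈ univ.filter fun i => m i = m j := by simp
    have hj' : j' ∈ univ.filter fun i => m i = m j := by simp [hjj]
    obtain ⟨x, hx⟩ := Finset.card_eq_one.mp hcard
    rw [hx] at hj hj'
    simp at hj hj'
    rw [hj, hj']
  -- the permutation
  have hcmem : ∀ j : Fin p, m j / q < p := by
    intro j
    rw [Nat.div_lt_iff_lt_mul hq0]
    have h1 := hmN j
    have h2 : N = p * q := by rw [hNq, mul_comm]
    omega
  set c : Fin p → Fin p := fun j => ⟨m j / q, hcmem j⟩ with hcdef
  have hcinj : Function.Injective c := by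
    intro j j' hjj
    apply hminj
    have h1 : m j / q = m j' / q := by
      have := congrArg Fin.val hjj
      simpa [hcdef] using this
    have h2 := Nat.mod_add_div (m j) q
    have h3 := Nat.mod_add_div (m j') q
    rw [hmr j] at h2
    rw [hmr j'] at h3
    rw [h1] at h2
    omega
  have hcbij : Function.Bijective c := Finite.injective_iff_bijective.mp hcinj
  refine ⟨r, hrq, (Equiv.ofBijective c hcbij).symm, ?_⟩
  intro j
  have hcσ : c ((Equiv.ofBijective c hcbij).symm j) = j :=
    Equiv.apply_symm_apply (Equiv.ofBijective c hcbij) j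
  set i := (Equiv.ofBijective c hcbij).symm j with hidef
  have hdiv : m i / q = (j : ℕ) := by
    have := congrArg Fin.val hcσ
    simpa [hcdef] using this
  have hmi : m i = r + q * (j : ℕ) := by
    have h2 := Nat.mod_add_div (m i) q
    rw [hmr i, hdiv] at h2
    omega
  have hmod : b i ≡ (m i : ℤ) [ZMOD (N:ℕ)] := by
    rw [hbm i]
    exact (Int.emod_emod_of_dvd (b i) dvd_rfl).symm
  calc b i ≡ (m i : ℤ) [ZMOD (N:ℕ)] := hmod
    _ = (r : ℤ) + (j : ℤ) * (p:ℤ) ^ (n-1) := by rw [hmi]; push_cast [hqdef]; ring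
end

section
/- Let p be a prime, n ≥ 1, and C a finite multiset of integers with ∑_{c∈C} e^{2πi c/p^n} = 0. Then p divides |C| and C can be partitioned into |C|/p sub-multisets C_1, …, C_{|C|/p}, each of cardinality p, such that ∑_{c∈C_j} e^{2πi c/p^n} = 0 for each j. -/
open Complex Polynomial

private lemma rs_exp_eq (N : ℕ) (hN : N ≠ 0) (c : ℤ) :
    Complex.exp (2 * Real.pi * Complex.I * c / N)
      = Complex.exp (2 * Real.pi * Complex.I / N) ^ ((c : ZMod N).val) := by
  haveI : NeZero N := ⟨hN⟩
  have h1 : Complex.exp (2 * Real.pi * Complex.I * c / N)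
      = Complex.exp (2 * Real.pi * Complex.I / N) ^ c := by
    rw [← Complex.exp_int_mul]
    congr 1
    ring
  have hroot : Complex.exp (2 * Real.pi * Complex.I / N) ^ (N : ℤ) = 1 := by
    rw [zpow_natCast]
    exact (Complex.isPrimitiveRoot_exp N hN).pow_eq_one
  have hz : (((c - (((c : ZMod N).val : ℤ))) : ℤ) : ZMod N) = 0 := by
    push_cast
    rw [ZMod.natCast_val, ZMod.cast_id]
    ring
  obtain ⟨k, hk⟩ := (ZMod.intCast_zmod_eq_zero_iff_dvd _ N).mp hz
  have hne : Complex.exp (2 * Real.pi * Complex.I / N) ≠ 0 := Complex.exp_ne_zero _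
  have hc : c = ((c : ZMod N).val : ℤ) + (N : ℤ) * k := by linarith [hk]
  rw [h1]
  conv_lhs => rw [hc]
  rw [zpow_add₀ hne, zpow_natCast, zpow_mul, hroot, one_zpow, mul_one]

private lemma rs_coeff_P (N : ℕ) (C : Multiset ℤ) (k : ℕ) :
    ((C.map fun c : ℤ => (X : ℚ[X]) ^ ((c : ZMod N).val)).sum).coeff k
      = ((C.filter fun c : ℤ => (((c : ZMod N)).val = k)).card : ℚ) := by
  induction C using Multiset.induction_on with
  | empty => simp
  | cons a s ih =>
      rw [Multiset.map_cons, Multiset.sum_cons, Polynomial.coeff_add, ih,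
        Multiset.filter_cons, Polynomial.coeff_X_pow]
      by_cases hak : ((a : ZMod N).val = k)
      · simp [hak, add_comm]
      · simp only [if_neg hak, if_neg (fun h : k = (a : ZMod N).val => hak h.symm), zero_add,
          Multiset.card_add, Multiset.card_zero, Nat.cast_add, Nat.cast_zero]

private lemma rs_exists_group (p n' : ℕ) (hp : p.Prime) (C : Multiset ℤ) (hC : C ≠ 0)
    (h : (C.map fun c : ℤ =>
        Complex.exp (2 * Real.pi * Complex.I * c / ((p ^ (n' + 1) : ℕ)))).sum = 0) :
    ∃ G : Multiset ℤ, G ≤ C ∧ Multiset.card G = p ∧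
      (G.map fun c : ℤ =>
        Complex.exp (2 * Real.pi * Complex.I * c / ((p ^ (n' + 1) : ℕ)))).sum = 0 := by
  set N : ℕ := p ^ (n' + 1) with hNdef
  set m : ℕ := p ^ n' with hmdef
  have hNm : N = m * p := by rw [hNdef, hmdef, pow_succ]
  have hm0 : 0 < m := pow_pos hp.pos _
  have hN0 : N ≠ 0 := (pow_pos hp.pos _).ne'
  haveI : NeZero N := ⟨hN0⟩
  set ζ : ℂ := Complex.exp (2 * Real.pi * Complex.I / N) with hζdef
  have hζ : IsPrimitiveRoot ζ N := Complex.isPrimitiveRoot_exp N hN0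
  have hfeq : ∀ c : ℤ, Complex.exp (2 * Real.pi * Complex.I * c / N) = ζ ^ ((c : ZMod N).val) :=
    fun c => rs_exp_eq N hN0 c
  set P : ℚ[X] := (C.map fun c : ℤ => (X : ℚ[X]) ^ ((c : ZMod N).val)).sum with hPdef
  have hcoeffP : ∀ k, P.coeff k = ((C.filter fun c : ℤ => (((c : ZMod N)).val = k)).card : ℚ) :=
    fun k => rs_coeff_P N C k
  -- P(ζ) = 0
  have haeval : Polynomial.aeval ζ P = 0 := by
    rw [hPdef, map_multiset_sum, Multiset.map_map]
    rw [← h]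
    congr 1
    apply Multiset.map_congr rfl
    intro c _
    simp only [Function.comp_apply, map_pow, Polynomial.aeval_X]
    exact (hfeq c).symm
  -- divisibility by cyclotomic polynomial
  have hdvd : Polynomial.cyclotomic N ℚ ∣ P := by
    rw [Polynomial.cyclotomic_eq_minpoly_rat hζ (Nat.pos_of_ne_zero hN0)]
    exact minpoly.dvd ℚ ζ haeval
  obtain ⟨Q, hPQ⟩ := hdvd
  obtain ⟨c0, hc0⟩ := Multiset.exists_mem_of_ne_zero hC
  set k0 : ℕ := ((c0 : ZMod N)).val with hk0def
  have hk0N : k0 < N := ZMod.val_lt _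
  set a0 : ℕ := k0 % m with ha0def
  set b0 : ℕ := k0 / m with hb0def
  have ha0m : a0 < m := Nat.mod_lt _ hm0
  have hb0p : b0 < p := by
    rw [hb0def]
    have hlt : k0 < m * p := by rw [← hNm]; exact hk0N
    exact Nat.div_lt_of_lt_mul hlt
  have hk0eq : a0 + b0 * m = k0 := Nat.mod_add_div' k0 m
  have hPk0 : 1 ≤ Multiset.card (C.filter fun c : ℤ => (((c : ZMod N)).val = k0)) := by
    have hmem : c0 ∈ C.filter (fun c : ℤ => ((c : ZMod N)).val = k0) :=
      Multiset.mem_filter.mpr ⟨hc0, rfl⟩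
    exact Multiset.card_pos_iff_exists_mem.mpr ⟨c0, hmem⟩
  have hPne : P ≠ 0 := by
    intro h0
    have := hcoeffP k0
    rw [h0, Polynomial.coeff_zero] at this
    have : Multiset.card (C.filter fun c : ℤ => (((c : ZMod N)).val = k0)) = 0 := by
      exact_mod_cast this.symm
    omega
  have hQne : Q ≠ 0 := by
    rintro rfl
    rw [mul_zero] at hPQ
    exact hPne hPQ
  have hdegP : P.natDegree < N := by
    rw [Polynomial.natDegree_lt_iff_degree_lt hPne]
    rw [Polynomial.degree_lt_iff_coeff_zero]
    intro j hj
    rw [hcoeffP]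
    have hempty : (C.filter fun c : ℤ => (((c : ZMod N)).val = j)) = 0 := by
      rw [Multiset.filter_eq_nil]
      intro a _ hval
      have : ((a : ZMod N)).val < N := ZMod.val_lt _
      rw [hval] at this
      exact absurd this (not_lt.mpr (by exact_mod_cast hj))
    rw [hempty]
    simp
  have hdegΦ : (Polynomial.cyclotomic N ℚ).natDegree = m * (p - 1) := by
    rw [Polynomial.natDegree_cyclotomic, hNdef, Nat.totient_prime_pow hp (Nat.succ_pos n')]
    simp [hmdef]
  have hdegsum : P.natDegree = (Polynomial.cyclotomic N ℚ).natDegree + Q.natDegree := by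
    rw [hPQ, Polynomial.natDegree_mul (Polynomial.cyclotomic_ne_zero N ℚ) hQne]
  have hQdeg : Q.natDegree < m := by
    have h1 : m * (p - 1) + Q.natDegree < m * p := by
      rw [← hdegΦ, ← hdegsum, ← hNm]
      exact hdegP
    have h2 : m * (p - 1) + m = m * p := by
      have hpp : p - 1 + 1 = p := Nat.succ_pred_eq_of_pos hp.pos
      calc m * (p - 1) + m = m * ((p - 1) + 1) := by ring
        _ = m * p := by rw [hpp]
    omega
  have hcoeffQ : ∀ a b : ℕ, a < m → b < p → P.coeff (a + b * m) = Q.coeff a := by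
    intro a b ham hbp
    rw [hPQ, Polynomial.cyclotomic_prime_pow_eq_geom_sum hp, Finset.sum_mul,
      Polynomial.finset_sum_coeff]
    simp only [← hmdef]
    rw [Finset.sum_eq_single b]
    · rw [← pow_mul, Polynomial.coeff_X_pow_mul']
      have hle : m * b ≤ a + b * m := by rw [mul_comm m b]; exact Nat.le_add_left _ _
      rw [if_pos hle]
      have he : a + b * m - m * b = a := by rw [mul_comm m b]; omega
      rw [he]
    · intro i _ hib
      rw [← pow_mul, Polynomial.coeff_X_pow_mul']
      rcases lt_or_gt_of_ne hib with hlt | hgt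
      · have h2 : m * i + m ≤ b * m := by
          calc m * i + m = (i + 1) * m := by ring
            _ ≤ b * m := Nat.mul_le_mul_right m hlt
        rw [if_pos (by omega)]
        apply Polynomial.coeff_eq_zero_of_natDegree_lt
        omega
      · have h3 : m * (b + 1) ≤ m * i := Nat.mul_le_mul_left m hgt
        have h4 : a + b * m < m * (b + 1) := by
          have h5 : m * (b + 1) = b * m + m := by ring
          omega
        rw [if_neg (by omega)]
    · intro hb
      exact absurd (Finset.mem_range.mpr hbp) hb
  -- For each residue class, there is a member of C
  have hmem : ∀ b : Fin p, ∃ x, x ∈ C ∧ ((x : ZMod N)).val = a0 + (b : ℕ) * m := by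
    intro b
    have h5 : P.coeff (a0 + (b : ℕ) * m) = Q.coeff a0 := hcoeffQ a0 b ha0m b.2
    have h6 : P.coeff (a0 + b0 * m) = Q.coeff a0 := hcoeffQ a0 b0 ha0m hb0p
    rw [hk0eq] at h6
    have h7 := hcoeffP (a0 + (b : ℕ) * m)
    have h8 := hcoeffP k0
    have h9 : (Multiset.card (C.filter fun c : ℤ => (((c : ZMod N)).val = a0 + (b : ℕ) * m)) : ℚ)
        = (Multiset.card (C.filter fun c : ℤ => (((c : ZMod N)).val = k0)) : ℚ) := by
      rw [← h7, ← h8, h5, h6]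
    have h10 : Multiset.card (C.filter fun c : ℤ => (((c : ZMod N)).val = a0 + (b : ℕ) * m))
        = Multiset.card (C.filter fun c : ℤ => (((c : ZMod N)).val = k0)) := by
      exact_mod_cast h9
    have h11 : 0 < Multiset.card
        (C.filter fun c : ℤ => (((c : ZMod N)).val = a0 + (b : ℕ) * m)) := by omega
    obtain ⟨y, hy⟩ := Multiset.card_pos_iff_exists_mem.mp h11
    exact ⟨y, (Multiset.mem_filter.mp hy).1, (Multiset.mem_filter.mp hy).2⟩
  choose x hxC hxval using hmem
  have hinj : Function.Injective x := by
    intro b b' hbb'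
    have he : a0 + (b : ℕ) * m = a0 + (b' : ℕ) * m := by
      rw [← hxval b, ← hxval b', hbb']
    have he2 : (b : ℕ) * m = (b' : ℕ) * m := by omega
    exact Fin.ext (Nat.eq_of_mul_eq_mul_right hm0 he2)
  refine ⟨Finset.univ.val.map x, ?_, ?_, ?_⟩
  · rw [Multiset.le_iff_count]
    intro y
    by_cases hy : y ∈ Finset.univ.val.map x
    · have hnd : (Finset.univ.val.map x).Nodup := Finset.univ.nodup.map hinj
      have h1 : Multiset.count y (Finset.univ.val.map x) ≤ 1 :=
        Multiset.nodup_iff_count_le_one.mp hnd y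
      have h2 : y ∈ C := by
        obtain ⟨b, _, rfl⟩ := Multiset.mem_map.mp hy
        exact hxC b
      exact h1.trans (Multiset.one_le_count_iff_mem.mpr h2)
    · rw [Multiset.count_eq_zero_of_notMem hy]
      exact Nat.zero_le _
  · rw [Multiset.card_map]
    exact Finset.card_fin p
  · rw [Multiset.map_map]
    have hcong : Finset.univ.val.map
          ((fun c : ℤ => Complex.exp (2 * Real.pi * Complex.I * c / (N : ℕ))) ∘ x)
        = Finset.univ.val.map (fun b : Fin p => ζ ^ a0 * (ζ ^ m) ^ (b : ℕ)) := by
      apply Multiset.map_congr rfl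
      intro b _
      simp only [Function.comp_apply]
      rw [hfeq, hxval, pow_add, mul_comm (b : ℕ) m, pow_mul]
    rw [hcong]
    have : (Finset.univ.val.map (fun b : Fin p => ζ ^ a0 * (ζ ^ m) ^ (b : ℕ))).sum
        = ∑ b : Fin p, ζ ^ a0 * (ζ ^ m) ^ (b : ℕ) := rfl
    rw [this, ← Finset.mul_sum, Fin.sum_univ_eq_sum_range (fun i => (ζ ^ m) ^ i)]
    rw [(hζ.pow (Nat.pos_of_ne_zero hN0) hNm).geom_sum_eq_zero hp.one_lt, mul_zero]

private lemma rs_main_aux (p n' : ℕ) (hp : p.Prime) : ∀ (k : ℕ) (C : Multiset ℤ),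
    Multiset.card C = k →
    (C.map fun c : ℤ =>
        Complex.exp (2 * Real.pi * Complex.I * c / ((p ^ (n' + 1) : ℕ)))).sum = 0 →
    p ∣ Multiset.card C ∧
      ∃ D : Multiset (Multiset ℤ),
        D.sum = C ∧ Multiset.card D = Multiset.card C / p ∧
          ∀ c ∈ D, Multiset.card c = p ∧
            (c.map fun x : ℤ =>
              Complex.exp (2 * Real.pi * Complex.I * x / ((p ^ (n' + 1) : ℕ)))).sum = 0 := by
  intro k
  induction k using Nat.strong_induction_on with
  | _ k ih =>
    intro C hcard h
    by_cases hC : C = 0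
    · subst hC
      refine ⟨by simp, 0, by simp, by simp, by simp⟩
    · obtain ⟨G, hGC, hGcard, hGsum⟩ := rs_exists_group p n' hp C hC h
      set C' : Multiset ℤ := C - G with hC'def
      have hadd : C' + G = C := tsub_add_cancel_of_le hGC
      have hcard' : Multiset.card C' + p = Multiset.card C := by
        rw [← hadd, Multiset.card_add, hGcard]
      have hsum' : (C'.map fun c : ℤ =>
          Complex.exp (2 * Real.pi * Complex.I * c / ((p ^ (n' + 1) : ℕ)))).sum = 0 := by
        have := h
        rw [← hadd, Multiset.map_add, Multiset.sum_add, hGsum, add_zero] at this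
        exact this
      have hlt : Multiset.card C' < k := by
        have hp0 := hp.pos
        omega
      obtain ⟨hdvd', D', hD'sum, hD'card, hD'prop⟩ :=
        ih (Multiset.card C') hlt C' rfl hsum'
      refine ⟨?_, G ::ₘ D', ?_, ?_, ?_⟩
      · rw [← hcard']
        exact dvd_add hdvd' dvd_rfl
      · rw [Multiset.sum_cons, hD'sum, add_comm]
        exact hadd
      · rw [Multiset.card_cons, hD'card, ← hcard', Nat.add_div_right _ hp.pos]
      · intro c hc
        rcases Multiset.mem_cons.mp hc with rfl | hc'
        · exact ⟨hGcard, hGsum⟩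
        · exact hD'prop c hc'

/-- If a finite multiset of `p^n`-th roots of unity sums to zero, then `p` divides its
cardinality and it can be partitioned into `|C|/p` sub-multisets of cardinality `p`,
each summing to zero. -/
theorem multiset_root_sum_decomposition (p n : ℕ) (hp : p.Prime) (hn : 1 ≤ n)
    (C : Multiset ℤ)
    (h : (C.map fun c => Complex.exp (2 * Real.pi * Complex.I * c / (p ^ n : ℕ))).sum = 0) :
    p ∣ Multiset.card C ∧
      ∃ D : Multiset (Multiset ℤ),
        D.sum = C ∧ Multiset.card D = Multiset.card C / p ∧
          ∀ c ∈ D, Multiset.card c = p ∧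
            (c.map fun x => Complex.exp (2 * Real.pi * Complex.I * x / (p ^ n : ℕ))).sum = 0 := by
  obtain ⟨n', rfl⟩ : ∃ n', n = n' + 1 := ⟨n - 1, by omega⟩
  have hsum_eq : ∀ S : Multiset ℤ,
      (Multiset.map (fun c : ℂ =>
          Complex.exp (2 * Real.pi * Complex.I * c / ((p ^ (n' + 1) : ℕ))))
        (do let a ← S; pure ((a : ℂ)))).sum
      = (S.map fun c : ℤ =>
          Complex.exp (2 * Real.pi * Complex.I * c / ((p ^ (n' + 1) : ℕ)))).sum := by
    intro S
    have hcoe : (do let a ← S; pure ((a : ℂ)) : Multiset ℂ)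
        = S.map (fun a : ℤ => (a : ℂ)) := by
      show Multiset.bind S (fun a => {(a : ℂ)}) = _
      rw [Multiset.bind_singleton]
    rw [hcoe, Multiset.map_map]
    rfl
  rw [hsum_eq C] at h
  obtain ⟨h1, D, h2, h3, h4⟩ := rs_main_aux p n' hp (Multiset.card C) C rfl h
  refine ⟨h1, D, h2, h3, ?_⟩
  intro c hc
  obtain ⟨h5, h6⟩ := h4 c hc
  refine ⟨h5, ?_⟩
  rw [hsum_eq c]
  exact h6
end

section
/- Let A ⊆ ℤ_N with mask polynomial A(x) = ∑_{a∈A} x^a, and let p be a prime factor of N. If k = |{d ≥ 0 : p^d divides N and A(ω_N^{N/p^d}) = 0}|, then p^k divides |A|. -/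
open Finset Complex Polynomial

attribute [local instance] Classical.propDecidable

lemma equidistrib {p : ℕ} (hp : p.Prime) (d : ℕ) (c : ℕ → ℕ)
    (h : ∑ r ∈ Finset.range (p ^ (d+1)), (c r : ℂ) *
      Complex.exp (2 * Real.pi * Complex.I * r / (p : ℂ) ^ (d+1)) = 0) :
    ∀ r < p ^ d, ∀ i < p, c (r + i * p ^ d) = c r := by
  set q := p ^ (d + 1) with hq
  have hq0 : q ≠ 0 := pow_ne_zero _ hp.pos.ne'
  have hqval : q = p ^ d * p := by rw [hq, pow_succ]
  set ζ : ℂ := Complex.exp (2 * Real.pi * Complex.I / q) with hζ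
  have hζprim : IsPrimitiveRoot ζ q := Complex.isPrimitiveRoot_exp q hq0
  set P : ℚ[X] := ∑ r ∈ Finset.range q, C (c r : ℚ) * X ^ r with hP
  have hcoeff : ∀ m, P.coeff m = if m < q then (c m : ℚ) else 0 := by
    intro m
    rw [hP, finset_sum_coeff]
    simp only [coeff_C_mul_X_pow]
    rw [Finset.sum_ite_eq (Finset.range q) m]
    simp [Finset.mem_range]
  have hexp : ∀ r : ℕ, Complex.exp (2 * Real.pi * Complex.I * r / (p : ℂ) ^ (d+1)) = ζ ^ r := by
    intro r
    rw [hζ, ← Complex.exp_nat_mul]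
    congr 1
    push_cast [hq]
    ring
  have haev : aeval ζ P = 0 := by
    rw [hP, map_sum, ← h]
    refine Finset.sum_congr rfl fun r _ => ?_
    rw [map_mul, aeval_C, aeval_X_pow, hexp]
    norm_num
  have hdvd : cyclotomic q ℚ ∣ P := by
    rw [cyclotomic_eq_minpoly_rat hζprim (Nat.pos_of_ne_zero hq0)]
    exact minpoly.dvd ℚ ζ haev
  obtain ⟨Q, hQ⟩ := hdvd
  intro r hr i hi
  have hlt : r + i * p ^ d < q := by
    have h1 : i * p ^ d + p ^ d ≤ p * p ^ d := by
      have := Nat.mul_le_mul_right (p ^ d) (show i + 1 ≤ p by omega)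
      rwa [add_one_mul] at this
    have h2 : q = p * p ^ d := by rw [hqval, mul_comm]
    omega
  by_cases hP0 : P = 0
  · have hz : ∀ m, m < q → c m = 0 := by
      intro m hm
      have := hcoeff m
      rw [hP0] at this
      simp [hm] at this
      exact_mod_cast this.symm
    have hrq : r < q := by
      have : p ^ d ≤ q := by
        rw [hqval]; exact Nat.le_mul_of_pos_right _ hp.pos
      omega
    rw [hz _ hlt, hz r hrq]
  · have hQ0 : Q ≠ 0 := by
      rintro rfl; rw [mul_zero] at hQ; exact hP0 hQ
    have hPdeg : P.natDegree ≤ q - 1 := by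
      rw [natDegree_le_iff_coeff_eq_zero]
      intro m hm
      rw [hcoeff]
      have : ¬ m < q := by omega
      simp [this]
    have hΦdeg : (cyclotomic q ℚ).natDegree = p ^ d * (p - 1) := by
      rw [natDegree_cyclotomic, hq, Nat.totient_prime_pow hp (Nat.succ_pos d)]
      simp
    have hQdeg : Q.natDegree < p ^ d := by
      have hnd := natDegree_mul (cyclotomic_ne_zero q ℚ) hQ0
      rw [← hQ, hΦdeg] at hnd
      have e : p ^ d * (p - 1) + p ^ d = q := by
        rw [hqval, ← Nat.mul_succ]
        congr 1
        have := hp.two_le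
        omega
      have hpd : 0 < p ^ d := pow_pos hp.pos d
      omega
    have hP2 : P = ∑ j ∈ Finset.range p, Q * X ^ (j * p ^ d) := by
      rw [hQ, cyclotomic_prime_pow_eq_geom_sum hp, Finset.sum_mul]
      refine Finset.sum_congr rfl fun j _ => ?_
      rw [← pow_mul, mul_comm (X ^ (p ^ d * j)) Q, mul_comm (p ^ d) j]
    have key : ∀ i' r', r' < p ^ d → i' < p → P.coeff (r' + i' * p ^ d) = Q.coeff r' := by
      intro i' r' hr' hi'
      rw [hP2, finset_sum_coeff]
      simp only [coeff_mul_X_pow']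
      rw [Finset.sum_eq_single i']
      · simp
      · intro j hj hne
        rw [Finset.mem_range] at hj
        rcases lt_or_gt_of_ne hne with hlt' | hgt
        · have h1 : j * p ^ d + p ^ d ≤ i' * p ^ d := by
            have := Nat.mul_le_mul_right (p ^ d) (show j + 1 ≤ i' by omega)
            rwa [add_one_mul] at this
          have h2 : j * p ^ d ≤ r' + i' * p ^ d := by omega
          rw [if_pos h2]
          apply coeff_eq_zero_of_natDegree_lt
          omega
        · have h1 : i' * p ^ d + p ^ d ≤ j * p ^ d := by
            have := Nat.mul_le_mul_right (p ^ d) (show i' + 1 ≤ j by omega)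
            rwa [add_one_mul] at this
          have h2 : ¬ j * p ^ d ≤ r' + i' * p ^ d := by omega
          rw [if_neg h2]
      · intro hni
        exact absurd (Finset.mem_range.mpr hi') hni
    have e1 : (c (r + i * p ^ d) : ℚ) = Q.coeff r := by
      rw [← key i r hr hi, hcoeff]
      simp [hlt]
    have e2 : (c r : ℚ) = Q.coeff r := by
      have h0 := key 0 r hr hp.pos
      simp only [zero_mul, add_zero] at h0
      rw [← h0, hcoeff]
      have hrq : r < q := by omega
      simp [hrq]
    exact_mod_cast e1.trans e2.symm

/-- If `k` is the number of `d ≥ 0` with `p^d ∣ N` for which the mask polynomial of `A`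
vanishes at `ω_N^{N/p^d}`, then `p^k` divides `|A|`. -/
theorem pow_dvd_card_of_zeros (N p : ℕ) (hN : 0 < N) (hp : p.Prime) (hpN : p ∣ N)
    (A : Finset (ZMod N)) (k : ℕ)
    (hk : ((Finset.range (N + 1)).filter fun d => p ^ d ∣ N ∧
        ∑ a ∈ A, Complex.exp (2 * Real.pi * Complex.I * (a.val * (N / p ^ d)) / N) = 0).card
      = k) :
    p ^ k ∣ A.card := by
  by_cases hA : A.card = 0
  · rw [hA]; exact dvd_zero _
  set S := (Finset.range (N + 1)).filter (fun d => p ^ d ∣ N ∧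
      ∑ a ∈ A, Complex.exp (2 * Real.pi * Complex.I * (a.val * (N / p ^ d)) / N) = 0) with hSdef
  set c : ℕ → ℕ → ℕ := fun d r => (A.filter fun a => a.val % p ^ d = r).card with hcdef
  have hp0 : (0:ℕ) < p := hp.pos
  have hNC : (N : ℂ) ≠ 0 := Nat.cast_ne_zero.mpr hN.ne'
  have hpC : (p : ℂ) ≠ 0 := Nat.cast_ne_zero.mpr hp0.ne'
  -- the sum over A rewritten via residue counts
  have h3 : ∀ d : ℕ,
      ∑ a ∈ A, Complex.exp (2 * Real.pi * Complex.I * (a.val * (N / p ^ d)) / N)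
        = ∑ r ∈ Finset.range (p ^ d), (c d r : ℂ) *
            Complex.exp (2 * Real.pi * Complex.I * r / (p:ℂ) ^ d) := by
    intro d
    set ζ : ℂ := Complex.exp (2 * Real.pi * Complex.I / (p:ℂ) ^ d) with hζ
    have hζ1 : ζ ^ (p ^ d) = 1 := by
      rw [hζ, ← Complex.exp_nat_mul]
      rw [show ((p ^ d : ℕ) : ℂ) * (2 * Real.pi * Complex.I / (p:ℂ)^d)
        = 2 * Real.pi * Complex.I by push_cast; field_simp]
      exact Complex.exp_two_pi_mul_I
    have hterm : ∀ a : ZMod N,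
        Complex.exp (2 * Real.pi * Complex.I * (a.val * (N / p ^ d)) / N)
          = ζ ^ (a.val % p ^ d) := by
      intro a
      have e1 : Complex.exp (2 * Real.pi * Complex.I * (a.val * (N / p ^ d)) / N)
          = ζ ^ a.val := by
        rw [hζ, ← Complex.exp_nat_mul]
        congr 1
        field_simp
      rw [e1]
      conv_lhs => rw [← Nat.div_add_mod a.val (p ^ d)]
      rw [pow_add, pow_mul, hζ1, one_pow, one_mul]
    rw [Finset.sum_congr rfl fun a _ => hterm a]
    rw [← Finset.sum_fiberwise_of_maps_to
      (t := Finset.range (p ^ d))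
      (g := fun a : ZMod N => a.val % p ^ d)
      (fun a _ => Finset.mem_range.mpr (Nat.mod_lt _ (pow_pos hp0 d)))
      (fun a : ZMod N => ζ ^ (a.val % p ^ d))]
    refine Finset.sum_congr rfl fun r hr => ?_
    rw [Finset.sum_congr rfl (fun a ha => by rw [(Finset.mem_filter.mp ha).2]),
      Finset.sum_const, nsmul_eq_mul]
    congr 1
    rw [hζ, ← Complex.exp_nat_mul]
    congr 1
    ring
  -- partition of counts
  have h2 : ∀ d r, r < p ^ d → c d r = ∑ i ∈ Finset.range p, c (d+1) (r + i * p ^ d) := by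
    intro d r hr
    have hsplit : A.filter (fun a => a.val % p ^ d = r)
        = (Finset.range p).biUnion
            (fun i => A.filter fun a => a.val % p ^ (d+1) = r + i * p ^ d) := by
      ext a
      simp only [Finset.mem_filter, Finset.mem_biUnion, Finset.mem_range]
      constructor
      · rintro ⟨ha, hmod⟩
        exact ⟨a.val / p ^ d % p, Nat.mod_lt _ hp0, ha,
          by rw [Nat.mod_pow_succ, hmod]; ring⟩
      · rintro ⟨i, hi, ha, hmod⟩
        refine ⟨ha, ?_⟩
        have hmm := Nat.mod_mod_of_dvd a.val (pow_dvd_pow p (Nat.le_succ d))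
        rw [hmod] at hmm
        rw [← hmm, Nat.add_mul_mod_self_right, Nat.mod_eq_of_lt hr]
    show (A.filter fun a => a.val % p ^ d = r).card = _
    rw [hsplit, Finset.card_biUnion]
    intro x hx y hy hxy
    simp only [Finset.disjoint_left, Finset.mem_filter]
    rintro a ⟨_, e1⟩ ⟨_, e2⟩
    rw [e1] at e2
    have hx' : x * p ^ d = y * p ^ d := by omega
    exact hxy (Nat.eq_of_mul_eq_mul_right (pow_pos hp0 d) hx')
  set t : ℕ → ℕ := fun d => (S.filter fun d' => d < d').card with htdef
  have htstep : ∀ d, t d = t (d+1) + (if (d+1) ∈ S then 1 else 0) := by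
    intro d
    have hsplit : (S.filter fun d' => d < d')
        = (S.filter fun d' => d+1 < d') ∪ (S.filter fun d' => d' = d+1) := by
      ext x
      simp only [Finset.mem_filter, Finset.mem_union]
      constructor
      · rintro ⟨hx, hlt⟩
        rcases Nat.lt_or_ge (d+1) x with h' | h'
        · exact Or.inl ⟨hx, h'⟩
        · exact Or.inr ⟨hx, by omega⟩
      · rintro (⟨hx, h'⟩ | ⟨hx, h'⟩) <;> exact ⟨hx, by omega⟩
    have hdisj : Disjoint (S.filter fun d' => d+1 < d') (S.filter fun d' => d' = d+1) := by
      simp only [Finset.disjoint_left, Finset.mem_filter]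
      rintro x ⟨_, h1⟩ ⟨_, h2⟩
      omega
    simp only [htdef]
    rw [hsplit, Finset.card_union_of_disjoint hdisj, Finset.filter_eq']
    split_ifs <;> simp
  have main : ∀ n d, N ≤ d + n → ∀ r, p ^ (t d) ∣ c d r := by
    intro n
    induction n with
    | zero =>
      intro d hd r
      have ht0 : t d = 0 := by
        simp only [htdef]
        rw [Finset.card_eq_zero, Finset.filter_eq_empty_iff]
        intro x hx
        have : x < N + 1 := Finset.mem_range.mp (Finset.mem_filter.mp hx).1
        omega
      rw [ht0, pow_zero]
      exact one_dvd _
    | succ n ih =>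
      intro d hd r
      by_cases hr : r < p ^ d
      · rw [h2 d r hr]
        by_cases hmem : (d+1) ∈ S
        · have hsum0 := (Finset.mem_filter.mp hmem).2.2
          rw [h3 (d+1)] at hsum0
          have heq := equidistrib hp d (c (d+1)) hsum0
          have hsum : ∑ i ∈ Finset.range p, c (d+1) (r + i * p ^ d) = p * c (d+1) r := by
            rw [Finset.sum_congr rfl fun i hi => heq r hr i (Finset.mem_range.mp hi),
              Finset.sum_const, Finset.card_range, smul_eq_mul]
          rw [hsum, htstep d, if_pos hmem, pow_succ, mul_comm (p ^ t (d+1)) p]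
          exact mul_dvd_mul_left p (ih (d+1) (by omega) r)
        · rw [htstep d, if_neg hmem, add_zero]
          exact Finset.dvd_sum fun i _ => ih (d+1) (by omega) (r + i * p ^ d)
      · have hz : c d r = 0 := by
          show (A.filter fun a => a.val % p ^ d = r).card = 0
          rw [Finset.card_eq_zero, Finset.filter_eq_empty_iff]
          intro a _
          have := Nat.mod_lt a.val (pow_pos hp0 d)
          omega
        rw [hz]
        exact dvd_zero _
  have hc00 : c 0 0 = A.card := by
    show (A.filter fun a => a.val % p ^ 0 = 0).card = A.card
    simp [Nat.mod_one]
  have h0S : (0:ℕ) ∉ S := by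
    intro h0
    have hsum0 := (Finset.mem_filter.mp h0).2.2
    rw [h3 0] at hsum0
    simp only [pow_zero, Finset.range_one, Finset.sum_singleton, Nat.cast_zero] at hsum0
    rw [show (2 * Real.pi * Complex.I * (0:ℂ) / (1:ℂ)) = 0 by ring, Complex.exp_zero,
      mul_one] at hsum0
    rw [hc00] at hsum0
    exact hA (Nat.cast_eq_zero.mp hsum0)
  have ht0 : t 0 = k := by
    rw [← hk]
    simp only [htdef]
    congr 1
    apply Finset.filter_true_of_mem
    intro x hx
    rcases Nat.eq_zero_or_pos x with rfl | h'
    · exact absurd hx h0S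
    · exact h'
  have := main N 0 (by omega) 0
  rw [ht0, hc00] at this
  exact this
end

section
/- Let p, q be distinct primes and Ω a tile of ℤ_{p^n} × ℤ_q written as Ω = ⨆_{j=0}^{q−1} (Ω_j × {j}) with Ω_j ⊆ ℤ_{p^n}. If |Ω| = p^m, then the sets Ω_0, Ω_1, …, Ω_{q−1} are pairwise disjoint and their union ⨆_j Ω_j is a p-homogeneous subset of ℤ_{p^n}. -/
open Finset

/-- `C ⊆ ℤ_{p^n}` is `p`-homogeneous with branched level set `I ⊆ {0,…,n-1}`. -/
def IsPHomogeneous (p n : ℕ) (C : Finset (ZMod (p ^ n))) (I : Finset ℕ) : Prop :=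
  I ⊆ Finset.range n ∧
    ∀ i ∈ Finset.range n, ∀ x ∈ C,
      ((C.filter fun y => y.val % p ^ i = x.val % p ^ i).image
          fun y => y.val % p ^ (i + 1)).card = if i ∈ I then p else 1

open Polynomial

noncomputable def primRoot (M : ℕ) : ℂ := Complex.exp (2 * Real.pi * Complex.I / M)

lemma primRoot_isPrimitiveRoot {M : ℕ} (hM : M ≠ 0) : IsPrimitiveRoot (primRoot M) M :=
  Complex.isPrimitiveRoot_exp M hM

lemma root_pow_of_dvd {ζ : ℂ} {a M : ℕ} (h1 : ζ ^ a = 1) (h : a ∣ M) : ζ ^ M = 1 := by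
  obtain ⟨c, rfl⟩ := h
  rw [pow_mul, h1, one_pow]

lemma pow_mod_eq {ζ : ℂ} {N : ℕ} (hN : ζ ^ N = 1) (a : ℕ) : ζ ^ (a % N) = ζ ^ a := by
  conv_rhs => rw [← Nat.div_add_mod a N]
  rw [pow_add, pow_mul, hN, one_pow, one_mul]

lemma sum_pow_eq_zero {ζ : ℂ} {N : ℕ} (h1 : ζ ≠ 1) (hN : ζ ^ N = 1) :
    ∑ k ∈ range N, ζ ^ k = 0 := by
  rw [geom_sum_eq h1, hN]
  simp

lemma pow_val_add {N : ℕ} [NeZero N] {ζ : ℂ} (hN : ζ ^ N = 1) (x y : ZMod N) :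
    ζ ^ (x + y).val = ζ ^ x.val * ζ ^ y.val := by
  rw [ZMod.val_add, pow_mod_eq hN, pow_add]

lemma sum_zmod_pow {N : ℕ} [NeZero N] (ζ : ℂ) :
    ∑ x : ZMod N, ζ ^ x.val = ∑ k ∈ range N, ζ ^ k := by
  refine Finset.sum_nbij' (fun x => x.val) (fun k => (k : ZMod N)) ?_ ?_ ?_ ?_ ?_
  · intro a _; exact mem_range.mpr (ZMod.val_lt a)
  · intro a _; exact mem_univ _
  · intro a _; exact ZMod.natCast_rightInverse a
  · intro k hk; exact ZMod.val_cast_of_lt (mem_range.mp hk)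
  · intro a _; rfl

lemma tiling_fiber_card {G : Type*} [AddCommGroup G] [DecidableEq G] {Ω T : Finset G}
    (h : IsTilingPair Ω T) (g : G) :
    ((Ω ×ˢ T).filter fun w => w.1 + w.2 = g).card = 1 := by
  obtain ⟨w, ⟨hw1, hw2, hw3⟩, huniq⟩ := h g
  rw [Finset.card_eq_one]
  refine ⟨w, ?_⟩
  ext z
  simp only [mem_filter, mem_product, mem_singleton]
  constructor
  · rintro ⟨⟨h1, h2⟩, h3⟩
    exact huniq z ⟨h1, h2, h3⟩
  · rintro rfl
    exact ⟨⟨hw1, hw2⟩, hw3⟩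

lemma tiling_card {G : Type*} [AddCommGroup G] [Fintype G] [DecidableEq G] {Ω T : Finset G}
    (h : IsTilingPair Ω T) : Ω.card * T.card = Fintype.card G := by
  have h1 := Finset.card_eq_sum_card_fiberwise
    (f := fun w : G × G => w.1 + w.2) (s := Ω ×ˢ T) (t := univ) (fun x _ => mem_univ _)
  rw [Finset.card_product] at h1
  rw [h1]
  simp only [tiling_fiber_card h]
  simp [Finset.card_univ]

lemma tiling_char_sum {G : Type*} [AddCommGroup G] [Fintype G] [DecidableEq G] {Ω T : Finset G}
    (h : IsTilingPair Ω T) (φ : G → ℂ) (hφ : ∀ a b, φ (a + b) = φ a * φ b) :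
    (∑ w ∈ Ω, φ w) * (∑ t ∈ T, φ t) = ∑ g : G, φ g := by
  rw [Finset.sum_mul_sum]
  have h2 : ∑ w ∈ Ω, ∑ t ∈ T, φ w * φ t = ∑ z ∈ Ω ×ˢ T, φ (z.1 + z.2) := by
    rw [Finset.sum_product]
    simp [hφ]
  rw [h2, ← Finset.sum_fiberwise_of_maps_to (g := fun z : G × G => z.1 + z.2)
    (t := univ) (fun x _ => mem_univ _) (fun z => φ (z.1 + z.2))]
  refine Finset.sum_congr rfl fun g _ => ?_
  have h3 : ∀ z ∈ (Ω ×ˢ T).filter (fun z : G × G => z.1 + z.2 = g), φ (z.1 + z.2) = φ g :=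
    fun z hz => by rw [(mem_filter.mp hz).2]
  rw [Finset.sum_congr rfl h3, Finset.sum_const, tiling_fiber_card h g, one_smul]

lemma cyclo_dvd_of_eval_zero {p : ℕ} (hp : p.Prime) {l : ℕ} {P : ℤ[X]}
    (hP : aeval (primRoot (p ^ l)) P = 0) : cyclotomic (p ^ l) ℤ ∣ P := by
  have hne : (p : ℕ) ^ l ≠ 0 := (pow_pos hp.pos l).ne'
  have hprim : IsPrimitiveRoot (primRoot (p ^ l)) (p ^ l) := Complex.isPrimitiveRoot_exp _ hne
  rw [Polynomial.cyclotomic_eq_minpoly hprim (pow_pos hp.pos l)]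
  exact minpoly.isIntegrallyClosed_dvd (hprim.isIntegral (pow_pos hp.pos l)) hP

lemma prod_cyclo_dvd {p : ℕ} (hp : p.Prime) (K : Finset ℕ) :
    ∀ P : ℤ[X], (∀ l ∈ K, cyclotomic (p ^ l) ℤ ∣ P) →
      (∏ l ∈ K, cyclotomic (p ^ l) ℤ) ∣ P := by
  induction K using Finset.induction_on with
  | empty => intro P _; simp
  | @insert a K ha ih =>
    intro P hdvd
    obtain ⟨Q, hQ⟩ := hdvd a (mem_insert_self _ _)
    rw [Finset.prod_insert ha, hQ]
    refine mul_dvd_mul_left _ (ih Q ?_)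
    intro l hl
    have hprime : Prime (cyclotomic (p ^ l) ℤ) :=
      UniqueFactorizationMonoid.irreducible_iff_prime.mp
        (Polynomial.cyclotomic.irreducible (pow_pos hp.pos l))
    have hpa : Prime (cyclotomic (p ^ a) ℤ) :=
      UniqueFactorizationMonoid.irreducible_iff_prime.mp
        (Polynomial.cyclotomic.irreducible (pow_pos hp.pos a))
    have h1 : cyclotomic (p ^ l) ℤ ∣ cyclotomic (p ^ a) ℤ * Q := hQ ▸ hdvd l (mem_insert_of_mem hl)
    rcases hprime.2.2 _ _ h1 with h | h
    · exfalso
      have h2 := (hprime.dvd_prime_iff_associated hpa).mp h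
      have h3 := Polynomial.eq_of_monic_of_associated
        (Polynomial.cyclotomic.monic _ ℤ) (Polynomial.cyclotomic.monic _ ℤ) h2
      have h4 : p ^ l = p ^ a := Polynomial.cyclotomic_injective h3
      have h5 : l = a := Nat.pow_right_injective hp.two_le h4
      exact ha (h5 ▸ hl)
    · exact h

lemma eval_one_prod_cyclo {p : ℕ} (hp : p.Prime) (K : Finset ℕ) (hK : ∀ l ∈ K, 1 ≤ l) :
    eval 1 (∏ l ∈ K, cyclotomic (p ^ l) ℤ) = (p : ℤ) ^ K.card := by
  haveI : Fact p.Prime := ⟨hp⟩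
  rw [Polynomial.eval_prod]
  rw [Finset.prod_congr rfl (fun l hl => ?_), Finset.prod_const]
  have h1 : l = (l - 1) + 1 := by have := hK l hl; omega
  rw [h1, Polynomial.eval_one_cyclotomic_prime_pow]

def HNat (p n : ℕ) (N I : Finset ℕ) : Prop :=
  I ⊆ range n ∧ ∀ i ∈ range n, ∀ x ∈ N,
    ((N.filter fun y => y % p ^ i = x % p ^ i).image fun y => y % p ^ (i + 1)).card
      = if i ∈ I then p else 1

lemma add_mul_pow_lt {p n r i : ℕ} (hp : 0 < p) (hr : r < p ^ n) (hi : i < p) :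
    r + i * p ^ n < p ^ (n + 1) := by
  have h1 : i * p ^ n ≤ (p - 1) * p ^ n := Nat.mul_le_mul_right _ (by omega)
  have h2 : (p - 1) * p ^ n + p ^ n = p ^ (n + 1) := by
    have h3 : p - 1 + 1 = p := by omega
    calc (p - 1) * p ^ n + p ^ n = (p - 1 + 1) * p ^ n := by ring
      _ = p * p ^ n := by rw [h3]
      _ = p ^ (n + 1) := (pow_succ' p n).symm
  omega

lemma sum_range_pow_succ {M : Type*} [AddCommMonoid M] (p n : ℕ) (hp : 0 < p) (f : ℕ → M) :
    ∑ k ∈ range (p ^ (n + 1)), f k = ∑ r ∈ range (p ^ n), ∑ i ∈ range p, f (r + i * p ^ n) := by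
  have hpn : 0 < p ^ n := pow_pos hp n
  rw [← Finset.sum_product']
  refine Finset.sum_nbij' (fun k => (k % p ^ n, k / p ^ n)) (fun z => z.1 + z.2 * p ^ n)
    ?_ ?_ ?_ ?_ ?_
  · intro k hk
    rw [mem_range] at hk
    rw [mem_product, mem_range, mem_range]
    refine ⟨Nat.mod_lt _ hpn, ?_⟩
    rw [Nat.div_lt_iff_lt_mul hpn]
    rw [pow_succ] at hk
    rw [mul_comm]
    exact hk
  · intro z hz
    rw [mem_product, mem_range, mem_range] at hz
    rw [mem_range]
    exact add_mul_pow_lt hp hz.1 hz.2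
  · intro k _
    exact Nat.mod_add_div' k (p ^ n)
  · intro z hz
    rw [mem_product, mem_range, mem_range] at hz
    have h1 : (z.1 + z.2 * p ^ n) % p ^ n = z.1 := by
      rw [Nat.add_mul_mod_self_right, Nat.mod_eq_of_lt hz.1]
    have h2 : (z.1 + z.2 * p ^ n) / p ^ n = z.2 := by
      rw [Nat.add_mul_div_right _ _ hpn, Nat.div_eq_of_lt hz.1, zero_add]
    show ((z.1 + z.2 * p ^ n) % p ^ n, (z.1 + z.2 * p ^ n) / p ^ n) = z
    rw [h1, h2]
  · intro k _
    rw [Nat.mod_add_div' k (p ^ n)]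

lemma filter_image_transfer {p n i : ℕ} (hi : i < n) (N M : Finset ℕ)
    (hM : M = N.image fun y => y % p ^ n) (x : ℕ) :
    ((N.filter fun y => y % p ^ i = x % p ^ i).image fun y => y % p ^ (i + 1))
      = ((M.filter fun y => y % p ^ i = x % p ^ i).image fun y => y % p ^ (i + 1)) := by
  subst hM
  have hdvd1 : p ^ i ∣ p ^ n := pow_dvd_pow p hi.le
  have hdvd2 : p ^ (i + 1) ∣ p ^ n := pow_dvd_pow p hi
  ext t
  simp only [mem_image, mem_filter]
  constructor
  · rintro ⟨y, ⟨hyN, hyx⟩, rfl⟩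
    exact ⟨y % p ^ n, ⟨⟨y, hyN, rfl⟩, by rw [Nat.mod_mod_of_dvd _ hdvd1]; exact hyx⟩,
      by rw [Nat.mod_mod_of_dvd _ hdvd2]⟩
  · rintro ⟨z, ⟨⟨y, hyN, rfl⟩, hyx⟩, rfl⟩
    refine ⟨y, ⟨hyN, ?_⟩, ?_⟩
    · rw [Nat.mod_mod_of_dvd _ hdvd1] at hyx; exact hyx
    · rw [Nat.mod_mod_of_dvd _ hdvd2]

lemma hnat_lift {p n : ℕ} (N₁ M I : Finset ℕ) (hM : M = N₁.image fun y => y % p ^ n)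
    (hH : HNat p n M I) {i : ℕ} (hi : i < n) {x : ℕ} (hx : x ∈ N₁) :
    ((N₁.filter fun y => y % p ^ i = x % p ^ i).image fun y => y % p ^ (i + 1)).card
      = if i ∈ I then p else 1 := by
  rw [filter_image_transfer hi N₁ M hM x]
  have hx' : x % p ^ n ∈ M := hM ▸ mem_image_of_mem _ hx
  have h := hH.2 i (mem_range.mpr hi) _ hx'
  rw [Nat.mod_mod_of_dvd x (pow_dvd_pow p hi.le)] at h
  exact h

theorem keyC (p : ℕ) (hp : p.Prime) :
    ∀ n : ℕ, ∀ J : Finset ℕ, J ⊆ Finset.Icc 1 n → ∀ c : ℕ → ℕ,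
      (∀ k, c k ≠ 0 → k < p ^ n) →
      (∑ k ∈ range (p ^ n), c k) = p ^ J.card →
      (∀ l ∈ J, ∑ k ∈ range (p ^ n), (c k : ℂ) * primRoot (p ^ l) ^ k = 0) →
      (∀ k, c k ≤ 1) ∧
        HNat p n ((range (p ^ n)).filter fun k => c k ≠ 0) (J.image fun l => l - 1) := by
  intro n
  induction n with
  | zero =>
    intro J hJ c hsupp hsum hvan
    have hJempty : J = ∅ := by
      rw [← Finset.subset_empty]
      intro l hl
      have h := hJ hl
      rw [mem_Icc] at h
      omega
    subst hJempty
    simp only [card_empty, pow_zero, Finset.sum_range_one] at hsum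
    have hle : ∀ k, c k ≤ 1 := by
      intro k
      rcases Nat.eq_zero_or_pos k with rfl | hk
      · omega
      · by_cases h : c k = 0
        · omega
        · have := hsupp k h
          rw [pow_zero] at this
          omega
    refine ⟨hle, ?_, ?_⟩
    · simp
    · intro i hi
      exact absurd hi (by simp)
  | succ n ih =>
    intro J hJ c hsupp hsum hvan
    have hpn : 0 < p ^ n := pow_pos hp.pos n
    have hpn1 : 0 < p ^ (n + 1) := pow_pos hp.pos (n + 1)
    have hple : p ^ n ≤ p ^ (n + 1) := Nat.pow_le_pow_right hp.pos (Nat.le_succ n)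
    by_cases hmem : n + 1 ∈ J
    · -- Subcase A : branching at the top level
      set P : ℤ[X] := ∑ k ∈ range (p ^ (n + 1)), Polynomial.C ((c k : ℤ)) * X ^ k with hPdef
      have hcoeff : ∀ k, P.coeff k = if k < p ^ (n + 1) then (c k : ℤ) else 0 := by
        intro k
        rw [hPdef, finset_sum_coeff]
        have h1 : ∀ j ∈ range (p ^ (n + 1)), (Polynomial.C ((c j : ℤ)) * X ^ j).coeff k
            = if j = k then (c j : ℤ) else 0 := by
          intro j _
          rw [Polynomial.coeff_C_mul, Polynomial.coeff_X_pow]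
          by_cases h : j = k
          · simp [h]
          · simp [h, Ne.symm h]
        rw [Finset.sum_congr rfl h1, Finset.sum_ite_eq' (range (p ^ (n + 1))) k fun j => (c j : ℤ)]
        simp [mem_range]
      have haeval : aeval (primRoot (p ^ (n + 1))) P = 0 := by
        have h := hvan (n + 1) hmem
        rw [hPdef, map_sum]
        simp only [map_mul, aeval_C, map_pow, aeval_X]
        calc ∑ k ∈ range (p ^ (n + 1)), ((c k : ℤ) : ℂ) * primRoot (p ^ (n + 1)) ^ k
            = ∑ k ∈ range (p ^ (n + 1)), (c k : ℂ) * primRoot (p ^ (n + 1)) ^ k := by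
              push_cast; rfl
          _ = 0 := h
      obtain ⟨Q, hPQ⟩ := cyclo_dvd_of_eval_zero hp haeval
      have heval1 : P.eval 1 = (p : ℤ) ^ J.card := by
        rw [hPdef, Polynomial.eval_finset_sum]
        simp only [Polynomial.eval_mul, Polynomial.eval_C, Polynomial.eval_pow,
          Polynomial.eval_X, one_pow, mul_one]
        rw [← Nat.cast_sum, hsum]
        push_cast
        rfl
      have hPne : P ≠ 0 := by
        intro h0
        rw [h0, Polynomial.eval_zero] at heval1
        have h1 : (0 : ℤ) < (p : ℤ) ^ J.card := pow_pos (by exact_mod_cast hp.pos) _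
        omega
      have hQne : Q ≠ 0 := by
        intro h0; rw [h0, mul_zero] at hPQ; exact hPne hPQ
      have hΦne : cyclotomic (p ^ (n + 1)) ℤ ≠ 0 := (cyclotomic.monic _ ℤ).ne_zero
      have hdegP : P.natDegree < p ^ (n + 1) := by
        rw [Polynomial.natDegree_lt_iff_degree_lt hPne]
        rw [Polynomial.degree_lt_iff_coeff_zero]
        intro m hm
        rw [hcoeff, if_neg (by exact_mod_cast not_lt.mpr (by exact_mod_cast hm))]
      have hdegΦ : (cyclotomic (p ^ (n + 1)) ℤ).natDegree = p ^ n * (p - 1) := by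
        rw [Polynomial.natDegree_cyclotomic, Nat.totient_prime_pow hp (Nat.succ_pos n)]
        simp
      have hdegsum : P.natDegree = (cyclotomic (p ^ (n + 1)) ℤ).natDegree + Q.natDegree := by
        rw [hPQ, Polynomial.natDegree_mul hΦne hQne]
      have hdegQ : Q.natDegree < p ^ n := by
        have h1 : p ^ n * (p - 1) + p ^ n = p ^ (n + 1) := by
          have h2 : p - 1 + 1 = p := by have := hp.pos; omega
          calc p ^ n * (p - 1) + p ^ n = p ^ n * (p - 1 + 1) := by ring
            _ = p ^ n * p := by rw [h2]
            _ = p ^ (n + 1) := (pow_succ p n).symm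
        omega
      have hcQ : ∀ k, k < p ^ (n + 1) → (c k : ℤ) = Q.coeff (k % p ^ n) := by
        intro k hk
        have h1 : (c k : ℤ) = P.coeff k := by rw [hcoeff, if_pos hk]
        rw [h1, hPQ, cyclotomic_prime_pow_eq_geom_sum hp, Finset.sum_mul, finset_sum_coeff]
        have h2 : ∀ i, ((X ^ p ^ n : ℤ[X]) ^ i * Q).coeff k
            = if p ^ n * i ≤ k then Q.coeff (k - p ^ n * i) else 0 := by
          intro i
          rw [← pow_mul, mul_comm ((X : ℤ[X]) ^ (p ^ n * i)) Q, Polynomial.coeff_mul_X_pow']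
        rw [Finset.sum_congr rfl (fun i _ => h2 i)]
        obtain ⟨e, he⟩ : ∃ e, k / p ^ n = e := ⟨_, rfl⟩
        obtain ⟨r, hr0⟩ : ∃ r, k % p ^ n = r := ⟨_, rfl⟩
        have hdm : p ^ n * e + r = k := by rw [← he, ← hr0]; exact Nat.div_add_mod k (p ^ n)
        have hmlt : r < p ^ n := by rw [← hr0]; exact Nat.mod_lt k hpn
        have hdiv : e < p := by
          rw [← he, Nat.div_lt_iff_lt_mul hpn, mul_comm]
          rw [pow_succ] at hk
          exact hk
        rw [hr0]
        rw [Finset.sum_eq_single e]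
        · rw [if_pos (le_trans (Nat.le_add_right _ _) hdm.le)]
          congr 1
          omega
        · intro i hi hne
          rw [mem_range] at hi
          rcases lt_or_gt_of_ne hne with h | h
          · have h3 : p ^ n * (i + 1) ≤ p ^ n * e := Nat.mul_le_mul_left _ (by omega)
            rw [mul_add, mul_one] at h3
            rw [if_pos (by omega)]
            exact Polynomial.coeff_eq_zero_of_natDegree_lt (by omega)
          · have h3 : p ^ n * (e + 1) ≤ p ^ n * i := Nat.mul_le_mul_left _ (by omega)
            rw [mul_add, mul_one] at h3
            rw [if_neg (by omega)]
        · intro h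
          exact absurd (mem_range.mpr hdiv) h
      have hper : ∀ k, k < p ^ (n + 1) → c k = c (k % p ^ n) := by
        intro k hk
        have h1 := hcQ k hk
        have h2 := hcQ (k % p ^ n) (lt_of_lt_of_le (Nat.mod_lt k hpn) hple)
        rw [Nat.mod_eq_of_lt (Nat.mod_lt k hpn)] at h2
        exact_mod_cast h1.trans h2.symm
      set c' : ℕ → ℕ := fun r => if r < p ^ n then c r else 0 with hc'def
      have hsupp' : ∀ k, c' k ≠ 0 → k < p ^ n := by
        intro k h
        by_contra hlt
        simp only [hc'def, if_neg hlt] at h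
        exact h rfl
      have hJ'sub : J.erase (n + 1) ⊆ Icc 1 n := by
        intro l hl
        rw [mem_erase] at hl
        have h := hJ hl.2
        rw [mem_Icc] at h ⊢
        have := hl.1
        omega
      have hcards : J.card = (J.erase (n + 1)).card + 1 := by
        rw [Finset.card_erase_of_mem hmem]
        have h : 0 < J.card := Finset.card_pos.mpr ⟨_, hmem⟩
        omega
      have hinner : ∀ r ∈ range (p ^ n), ∑ i ∈ range p, c (r + i * p ^ n) = p * c' r := by
        intro r hr
        rw [mem_range] at hr
        have h1 : ∀ i ∈ range p, c (r + i * p ^ n) = c' r := by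
          intro i hi
          rw [mem_range] at hi
          have hlt : r + i * p ^ n < p ^ (n + 1) := add_mul_pow_lt hp.pos hr hi
          rw [hper _ hlt, Nat.add_mul_mod_self_right, Nat.mod_eq_of_lt hr]
          simp only [hc'def, if_pos hr]
        rw [Finset.sum_congr rfl h1, Finset.sum_const, card_range, smul_eq_mul]
      have hsum' : ∑ r ∈ range (p ^ n), c' r = p ^ (J.erase (n + 1)).card := by
        have h1 : p * ∑ r ∈ range (p ^ n), c' r = p * p ^ (J.erase (n + 1)).card := by
          rw [Finset.mul_sum]
          rw [← Finset.sum_congr rfl hinner]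
          rw [← sum_range_pow_succ p n hp.pos c, hsum, hcards, pow_succ]
          ring
        exact Nat.eq_of_mul_eq_mul_left hp.pos h1
      have hvan' : ∀ l ∈ J.erase (n + 1),
          ∑ r ∈ range (p ^ n), (c' r : ℂ) * primRoot (p ^ l) ^ r = 0 := by
        intro l hl
        rw [mem_erase] at hl
        have hlIcc := hJ hl.2
        rw [mem_Icc] at hlIcc
        have hroot : primRoot (p ^ l) ^ p ^ n = 1 :=
          root_pow_of_dvd (primRoot_isPrimitiveRoot (pow_pos hp.pos l).ne').pow_eq_one
            (pow_dvd_pow p (by omega))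
        have h := hvan l hl.2
        rw [sum_range_pow_succ p n hp.pos (fun k => (c k : ℂ) * primRoot (p ^ l) ^ k)] at h
        have h2 : ∀ r ∈ range (p ^ n),
            ∑ i ∈ range p, (c (r + i * p ^ n) : ℂ) * primRoot (p ^ l) ^ (r + i * p ^ n)
              = (p : ℂ) * ((c' r : ℂ) * primRoot (p ^ l) ^ r) := by
          intro r hr
          rw [mem_range] at hr
          have h3 : ∀ i ∈ range p,
              (c (r + i * p ^ n) : ℂ) * primRoot (p ^ l) ^ (r + i * p ^ n)
                = (c' r : ℂ) * primRoot (p ^ l) ^ r := by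
            intro i hi
            rw [mem_range] at hi
            have hlt : r + i * p ^ n < p ^ (n + 1) := add_mul_pow_lt hp.pos hr hi
            have hc1 : c (r + i * p ^ n) = c' r := by
              rw [hper _ hlt, Nat.add_mul_mod_self_right, Nat.mod_eq_of_lt hr]
              simp only [hc'def, if_pos hr]
            rw [hc1, pow_add, mul_comm i (p ^ n), pow_mul, hroot, one_pow, mul_one]
          rw [Finset.sum_congr rfl h3, Finset.sum_const, card_range, nsmul_eq_mul]
        rw [Finset.sum_congr rfl h2, ← Finset.mul_sum] at h
        have hpne : (p : ℂ) ≠ 0 := Nat.cast_ne_zero.mpr hp.ne_zero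
        exact (mul_eq_zero.mp h).resolve_left hpne
      obtain ⟨hle', hH'⟩ := ih (J.erase (n + 1)) hJ'sub c' hsupp' hsum' hvan'
      have hle : ∀ k, c k ≤ 1 := by
        intro k
        by_cases hk : k < p ^ (n + 1)
        · rw [hper k hk]
          have h1 := hle' (k % p ^ n)
          simp only [hc'def, if_pos (Nat.mod_lt k hpn)] at h1
          exact h1
        · by_cases h : c k = 0
          · omega
          · exact absurd (hsupp k h) hk
      set N₁ := (range (p ^ (n + 1))).filter (fun k => c k ≠ 0) with hN₁
      set N' := (range (p ^ n)).filter (fun k => c' k ≠ 0) with hN'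
      have hMN : N' = N₁.image fun y => y % p ^ n := by
        ext r
        simp only [hN', hN₁, mem_filter, mem_image, mem_range]
        constructor
        · rintro ⟨hr, hcr⟩
          simp only [hc'def, if_pos hr] at hcr
          exact ⟨r, ⟨⟨lt_of_lt_of_le hr hple, hcr⟩, Nat.mod_eq_of_lt hr⟩⟩
        · rintro ⟨y, ⟨hy, hcy⟩, rfl⟩
          refine ⟨Nat.mod_lt y hpn, ?_⟩
          simp only [hc'def, if_pos (Nat.mod_lt y hpn)]
          rw [← hper y hy]
          exact hcy
      have hIid : J.image (fun l => l - 1) = insert n ((J.erase (n + 1)).image (fun l => l - 1)) := by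
        ext t
        simp only [mem_image, mem_insert, mem_erase]
        constructor
        · rintro ⟨l, hl, rfl⟩
          by_cases h : l = n + 1
          · left; omega
          · right; exact ⟨l, ⟨h, hl⟩, rfl⟩
        · rintro (h | ⟨l, ⟨hne, hl⟩, rfl⟩)
          · exact ⟨n + 1, hmem, by omega⟩
          · exact ⟨l, hl, rfl⟩
      refine ⟨hle, ?_, ?_⟩
      · intro t ht
        obtain ⟨l, hl, rfl⟩ := mem_image.mp ht
        have h := hJ hl
        rw [mem_Icc] at h
        rw [mem_range]
        omega
      · intro i hi x hx
        rw [mem_range] at hi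
        by_cases hin : i = n
        · subst hin
          have hxlt : x < p ^ (i + 1) := by
            have h := (mem_filter.mp hx).1
            rwa [mem_range] at h
          have hcx : c x ≠ 0 := (mem_filter.mp hx).2
          have hite : i ∈ J.image (fun l => l - 1) := by
            rw [hIid]; exact mem_insert_self _ _
          rw [if_pos hite]
          have hF : N₁.filter (fun y => y % p ^ i = x % p ^ i)
              = (range p).image (fun j => x % p ^ i + j * p ^ i) := by
            ext y
            simp only [mem_filter, mem_image, mem_range, hN₁]
            constructor
            · rintro ⟨⟨hy, hcy⟩, hyx⟩
              refine ⟨y / p ^ i, ?_, ?_⟩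
              · rw [Nat.div_lt_iff_lt_mul hpn, mul_comm]
                rw [pow_succ] at hy
                exact hy
              · rw [← hyx]
                exact Nat.mod_add_div' y (p ^ i)
            · rintro ⟨j, hj, rfl⟩
              have hxm : x % p ^ i < p ^ i := Nat.mod_lt x hpn
              have hlt : x % p ^ i + j * p ^ i < p ^ (i + 1) := add_mul_pow_lt hp.pos hxm hj
              refine ⟨⟨hlt, ?_⟩, ?_⟩
              · rw [hper _ hlt, Nat.add_mul_mod_self_right, Nat.mod_eq_of_lt hxm,
                  ← hper x hxlt]
                exact hcx
              · rw [Nat.add_mul_mod_self_right, Nat.mod_eq_of_lt hxm]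
          have himg : (N₁.filter (fun y => y % p ^ i = x % p ^ i)).image
                (fun y => y % p ^ (i + 1))
              = N₁.filter (fun y => y % p ^ i = x % p ^ i) := by
            have heq : Set.EqOn (fun y => y % p ^ (i + 1)) id
                ↑(N₁.filter (fun y => y % p ^ i = x % p ^ i)) := by
              intro y hy
              have h1 : y ∈ N₁ := (mem_filter.mp (Finset.mem_coe.mp hy)).1
              rw [hN₁, mem_filter, mem_range] at h1
              exact Nat.mod_eq_of_lt h1.1
            rw [Finset.image_congr heq, Finset.image_id]
          rw [himg, hF, Finset.card_image_of_injOn, card_range]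
          intro a _ b _ hab
          have hab' : x % p ^ i + a * p ^ i = x % p ^ i + b * p ^ i := hab
          exact Nat.eq_of_mul_eq_mul_right hpn (Nat.add_left_cancel hab')
        · have hi' : i < n := by omega
          rw [hnat_lift N₁ N' _ hMN hH' hi' hx]
          have hiff : (i ∈ (J.erase (n + 1)).image fun l => l - 1)
              ↔ (i ∈ J.image fun l => l - 1) := by
            rw [hIid, mem_insert]
            constructor
            · exact Or.inr
            · rintro (h | h)
              · exact absurd h hin
              · exact h
          exact if_congr hiff rfl rfl
    · -- Subcase B : no branching at the top level
      have hJsub : J ⊆ Icc 1 n := by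
        intro l hl
        have h := hJ hl
        rw [mem_Icc] at h ⊢
        have hne : l ≠ n + 1 := fun he => hmem (he ▸ hl)
        omega
      set cb : ℕ → ℕ := fun r => if r < p ^ n then ∑ i ∈ range p, c (r + i * p ^ n) else 0
        with hcbdef
      have hsuppb : ∀ k, cb k ≠ 0 → k < p ^ n := by
        intro k h
        by_contra hlt
        simp only [hcbdef, if_neg hlt] at h
        exact h rfl
      have hsumb : ∑ r ∈ range (p ^ n), cb r = p ^ J.card := by
        rw [← hsum, sum_range_pow_succ p n hp.pos c]
        refine Finset.sum_congr rfl fun r hr => ?_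
        rw [mem_range] at hr
        simp only [hcbdef, if_pos hr]
      have hvanb : ∀ l ∈ J, ∑ r ∈ range (p ^ n), (cb r : ℂ) * primRoot (p ^ l) ^ r = 0 := by
        intro l hl
        have hlIcc := hJsub hl
        rw [mem_Icc] at hlIcc
        have hroot : primRoot (p ^ l) ^ p ^ n = 1 :=
          root_pow_of_dvd (primRoot_isPrimitiveRoot (pow_pos hp.pos l).ne').pow_eq_one
            (pow_dvd_pow p hlIcc.2)
        have h := hvan l hl
        rw [sum_range_pow_succ p n hp.pos (fun k => (c k : ℂ) * primRoot (p ^ l) ^ k)] at h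
        rw [← h]
        refine Finset.sum_congr rfl fun r hr => ?_
        rw [mem_range] at hr
        simp only [hcbdef, if_pos hr]
        push_cast
        rw [Finset.sum_mul]
        refine Finset.sum_congr rfl fun i _ => ?_
        congr 1
        rw [pow_add, mul_comm i (p ^ n), pow_mul, hroot, one_pow, mul_one]
      obtain ⟨hleb, hHb⟩ := ih J hJsub cb hsuppb hsumb hvanb
      have hdivlt : ∀ y, y < p ^ (n + 1) → y / p ^ n < p := by
        intro y hy
        rw [Nat.div_lt_iff_lt_mul hpn, mul_comm]
        rw [pow_succ] at hy
        exact hy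
      have hcble : ∀ y, y < p ^ (n + 1) → c y ≤ cb (y % p ^ n) := by
        intro y hy
        have hm : y % p ^ n < p ^ n := Nat.mod_lt _ hpn
        simp only [hcbdef, if_pos hm]
        calc c y = c (y % p ^ n + y / p ^ n * p ^ n) := by rw [Nat.mod_add_div' y (p ^ n)]
          _ ≤ ∑ i ∈ range p, c (y % p ^ n + i * p ^ n) :=
              Finset.single_le_sum (f := fun i => c (y % p ^ n + i * p ^ n))
                (fun i _ => Nat.zero_le _) (mem_range.mpr (hdivlt y hy))
      have hle : ∀ k, c k ≤ 1 := by
        intro k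
        by_cases hk : k < p ^ (n + 1)
        · exact (hcble k hk).trans (hleb _)
        · by_cases h : c k = 0
          · omega
          · exact absurd (hsupp k h) hk
      have huniq : ∀ y, y < p ^ (n + 1) → c y ≠ 0 → ∀ z, z < p ^ (n + 1) → c z ≠ 0 →
          y % p ^ n = z % p ^ n → y = z := by
        intro y hy hcy z hz hcz hyz
        by_contra hne
        obtain ⟨ey, hey⟩ : ∃ e, y / p ^ n = e := ⟨_, rfl⟩
        obtain ⟨ez, hez⟩ : ∃ e, z / p ^ n = e := ⟨_, rfl⟩
        have hdy : ey < p := hey ▸ hdivlt y hy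
        have hdz : ez < p := hez ▸ hdivlt z hz
        have hdmy : y % p ^ n + ey * p ^ n = y := by rw [← hey]; exact Nat.mod_add_div' y _
        have hdmz : z % p ^ n + ez * p ^ n = z := by rw [← hez]; exact Nat.mod_add_div' z _
        have hdne : ey ≠ ez := by
          intro he
          rw [he] at hdmy
          rw [← hyz] at hdmz
          omega
        have hsum2 : c y + c z ≤ ∑ i ∈ range p, c (y % p ^ n + i * p ^ n) := by
          have hsub : ({ey, ez} : Finset ℕ) ⊆ range p := by
            intro t ht
            rcases Finset.mem_insert.mp ht with rfl | ht
            · exact mem_range.mpr hdy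
            · rw [Finset.mem_singleton] at ht
              subst ht
              exact mem_range.mpr hdz
          calc c y + c z
              = ∑ i ∈ ({ey, ez} : Finset ℕ), c (y % p ^ n + i * p ^ n) := by
                rw [Finset.sum_pair hdne, hdmy]
                congr 1
                rw [hyz, hdmz]
            _ ≤ ∑ i ∈ range p, c (y % p ^ n + i * p ^ n) :=
                Finset.sum_le_sum_of_subset hsub
        have hcb2 : cb (y % p ^ n) ≤ 1 := hleb _
        have h2 : 2 ≤ cb (y % p ^ n) := by
          have hm : y % p ^ n < p ^ n := Nat.mod_lt _ hpn
          simp only [hcbdef, if_pos hm]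
          omega
        omega
      set N₁ := (range (p ^ (n + 1))).filter (fun k => c k ≠ 0) with hN₁
      set Nb := (range (p ^ n)).filter (fun k => cb k ≠ 0) with hNb
      have hMN : Nb = N₁.image fun y => y % p ^ n := by
        ext r
        simp only [hNb, hN₁, mem_filter, mem_image, mem_range]
        constructor
        · rintro ⟨hr, hcr⟩
          simp only [hcbdef, if_pos hr] at hcr
          obtain ⟨i, hi, hci⟩ : ∃ i ∈ range p, c (r + i * p ^ n) ≠ 0 := by
            by_contra hall
            push_neg at hall
            exact hcr (Finset.sum_eq_zero hall)
          exact ⟨r + i * p ^ n, ⟨add_mul_pow_lt hp.pos hr (mem_range.mp hi), hci⟩,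
            by rw [Nat.add_mul_mod_self_right, Nat.mod_eq_of_lt hr]⟩
        · rintro ⟨y, ⟨hy, hcy⟩, rfl⟩
          refine ⟨Nat.mod_lt _ hpn, ?_⟩
          simp only [hcbdef, if_pos (Nat.mod_lt y hpn)]
          intro h0
          have h1 : c (y % p ^ n + y / p ^ n * p ^ n) = 0 :=
            Finset.sum_eq_zero_iff.mp h0 _ (mem_range.mpr (hdivlt y hy))
          rw [Nat.mod_add_div'] at h1
          exact hcy h1
      refine ⟨hle, ?_, ?_⟩
      · exact (hHb.1).trans (Finset.range_subset_range.mpr (Nat.le_succ n))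
      · intro i hi x hx
        rw [mem_range] at hi
        by_cases hin : i = n
        · subst hin
          have hnI : i ∉ J.image (fun l => l - 1) := by
            intro h
            obtain ⟨l, hl, hl1⟩ := mem_image.mp h
            have h2 := hJsub hl
            rw [mem_Icc] at h2
            omega
          rw [if_neg hnI]
          have hxlt : x < p ^ (i + 1) := by
            have h := (mem_filter.mp hx).1
            rwa [mem_range] at h
          have hcx : c x ≠ 0 := (mem_filter.mp hx).2
          have hFx : N₁.filter (fun y => y % p ^ i = x % p ^ i) = {x} := by
            ext y
            simp only [mem_filter, Finset.mem_singleton, hN₁, mem_range]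
            constructor
            · rintro ⟨⟨hy, hcy⟩, hyx⟩
              exact huniq y hy hcy x hxlt hcx hyx
            · rintro rfl
              exact ⟨⟨hxlt, hcx⟩, rfl⟩
          rw [hFx]
          simp
        · have hi' : i < n := by omega
          rw [hnat_lift N₁ Nb _ hMN hHb hi' hx]


/-- If a tile `Ω` of `ℤ_{p^n} × ℤ_q` has cardinality `p^m`, then its slices
`Ω_j = {x : (x, j) ∈ Ω}` are pairwise disjoint and their union is `p`-homogeneous. -/
theorem tile_slices_disjoint_union_pHomogeneous (p q n m : ℕ)
    (hp : p.Prime) (hq : q.Prime) (hpq : p ≠ q) [NeZero q] [NeZero (p ^ n)]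
    (Ω : Finset (ZMod (p ^ n) × ZMod q)) (htile : ∃ T, IsTilingPair Ω T)
    (hcard : Ω.card = p ^ m)
    (Ωj : ZMod q → Finset (ZMod (p ^ n)))
    (hΩj : ∀ j, Ωj j = Finset.univ.filter fun x => (x, j) ∈ Ω) :
    (∀ j j' : ZMod q, j ≠ j' → Disjoint (Ωj j) (Ωj j')) ∧
      ∃ I, IsPHomogeneous p n (Finset.univ.biUnion Ωj) I := by
  classical
  obtain ⟨T, hT⟩ := htile
  have hcardG : Fintype.card (ZMod (p ^ n) × ZMod q) = p ^ n * q := by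
    rw [Fintype.card_prod, ZMod.card, ZMod.card]
  have hΩT : p ^ m * T.card = p ^ n * q := by
    rw [← hcard, ← hcardG]
    exact tiling_card hT
  have hpq' : Nat.Coprime p q := (Nat.coprime_primes hp hq).mpr hpq
  have hmn : m ≤ n := by
    have h1 : p ^ m ∣ p ^ n * q := ⟨T.card, hΩT.symm⟩
    have h2 : p ^ m ∣ p ^ n := (Nat.Coprime.pow_left m hpq').dvd_of_dvd_mul_right h1
    exact (Nat.pow_dvd_pow_iff_le_right hp.one_lt).mp h2
  have hTcard : T.card = p ^ (n - m) * q := by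
    have h1 : p ^ m * T.card = p ^ m * (p ^ (n - m) * q) := by
      rw [hΩT, ← mul_assoc, ← pow_add]
      congr 2
      omega
    exact Nat.eq_of_mul_eq_mul_left (pow_pos hp.pos m) h1
  have hvanish : ∀ l ∈ Icc 1 n,
      (∑ w ∈ Ω, primRoot (p ^ l) ^ w.1.val) * (∑ w ∈ T, primRoot (p ^ l) ^ w.1.val) = 0 := by
    intro l hl
    rw [mem_Icc] at hl
    have hprim : IsPrimitiveRoot (primRoot (p ^ l)) (p ^ l) :=
      primRoot_isPrimitiveRoot (pow_pos hp.pos l).ne'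
    have hone : primRoot (p ^ l) ≠ 1 := hprim.ne_one (Nat.one_lt_pow (by omega) hp.one_lt)
    have hpn1 : primRoot (p ^ l) ^ (p ^ n) = 1 :=
      root_pow_of_dvd hprim.pow_eq_one (pow_dvd_pow p hl.2)
    have hφ : ∀ a b : ZMod (p ^ n) × ZMod q,
        primRoot (p ^ l) ^ (a + b).1.val
          = primRoot (p ^ l) ^ a.1.val * primRoot (p ^ l) ^ b.1.val := by
      intro a b
      have h0 : (a + b).1 = a.1 + b.1 := rfl
      rw [h0, pow_val_add hpn1]
    rw [tiling_char_sum hT (fun g => primRoot (p ^ l) ^ g.1.val) hφ]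
    rw [Fintype.sum_prod_type]
    have h2 : ∀ x : ZMod (p ^ n), (∑ _j : ZMod q, primRoot (p ^ l) ^ x.val)
        = (q : ℂ) * primRoot (p ^ l) ^ x.val := by
      intro x
      rw [Finset.sum_const, Finset.card_univ, ZMod.card, nsmul_eq_mul]
    rw [Finset.sum_congr rfl (fun x _ => h2 x), ← Finset.mul_sum, sum_zmod_pow,
      sum_pow_eq_zero hone hpn1, mul_zero]
  set c : ℕ → ℕ := fun k => (Ω.filter fun w => w.1.val = k).card with hcdef
  have hsupp : ∀ k, c k ≠ 0 → k < p ^ n := by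
    intro k h
    simp only [hcdef] at h
    obtain ⟨w, hw⟩ := Finset.card_pos.mp (Nat.pos_of_ne_zero h)
    rw [mem_filter] at hw
    rw [← hw.2]
    exact ZMod.val_lt _
  have hsumc : ∑ k ∈ range (p ^ n), c k = p ^ m := by
    rw [← hcard]
    exact (Finset.card_eq_sum_card_fiberwise
      (f := fun w : ZMod (p ^ n) × ZMod q => w.1.val) (t := range (p ^ n))
      (fun w _ => mem_range.mpr (ZMod.val_lt _))).symm
  have hSc : ∀ ζ : ℂ, ∑ w ∈ Ω, ζ ^ w.1.val = ∑ k ∈ range (p ^ n), (c k : ℂ) * ζ ^ k := by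
    intro ζ
    rw [← Finset.sum_fiberwise_of_maps_to (g := fun w : ZMod (p ^ n) × ZMod q => w.1.val)
      (t := range (p ^ n)) (fun w _ => mem_range.mpr (ZMod.val_lt _)) (fun w => ζ ^ w.1.val)]
    refine Finset.sum_congr rfl fun k _ => ?_
    have h1 : ∀ w ∈ Ω.filter (fun w : ZMod (p ^ n) × ZMod q => w.1.val = k),
        ζ ^ w.1.val = ζ ^ k := fun w hw => by rw [(mem_filter.mp hw).2]
    rw [Finset.sum_congr rfl h1, Finset.sum_const, nsmul_eq_mul]
  set J := (Icc 1 n).filter (fun l => ∑ w ∈ Ω, primRoot (p ^ l) ^ w.1.val = 0) with hJdef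
  set K := (Icc 1 n).filter (fun l => ∑ w ∈ T, primRoot (p ^ l) ^ w.1.val = 0) with hKdef
  have hJK : Icc 1 n ⊆ J ∪ K := by
    intro l hl
    rcases mul_eq_zero.mp (hvanish l hl) with h | h
    · exact mem_union_left _ (mem_filter.mpr ⟨hl, h⟩)
    · exact mem_union_right _ (mem_filter.mpr ⟨hl, h⟩)
  set PT : Polynomial ℤ := ∑ w ∈ T, Polynomial.X ^ w.1.val with hPT
  have hdvdK : ∀ l ∈ K, Polynomial.cyclotomic (p ^ l) ℤ ∣ PT := by
    intro l hl
    apply cyclo_dvd_of_eval_zero hp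
    rw [hPT, map_sum]
    simp only [map_pow, Polynomial.aeval_X]
    exact (mem_filter.mp hl).2
  have hKprod := prod_cyclo_dvd hp K PT hdvdK
  have hKeval := Polynomial.eval_dvd (x := (1 : ℤ)) hKprod
  rw [eval_one_prod_cyclo hp K (fun l hl => by
    have h := (mem_filter.mp hl).1
    rw [mem_Icc] at h
    exact h.1)] at hKeval
  have hPTeval : PT.eval 1 = (T.card : ℤ) := by
    rw [hPT, Polynomial.eval_finset_sum]
    simp
  rw [hPTeval] at hKeval
  have hKnat : p ^ K.card ∣ T.card := by exact_mod_cast hKeval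
  have hKbound : K.card ≤ n - m := by
    rw [hTcard] at hKnat
    have h2 : p ^ K.card ∣ p ^ (n - m) :=
      (Nat.Coprime.pow_left _ hpq').dvd_of_dvd_mul_right hKnat
    exact (Nat.pow_dvd_pow_iff_le_right hp.one_lt).mp h2
  have hJcard : m ≤ J.card := by
    have h1 : (Icc 1 n).card = n := by rw [Nat.card_Icc]; omega
    have h2 := Finset.card_le_card hJK
    have h3 := Finset.card_union_le J K
    omega
  obtain ⟨J₀, hJ₀sub, hJ₀card⟩ := Finset.exists_subset_card_eq hJcard
  have hJ₀Icc : J₀ ⊆ Icc 1 n := hJ₀sub.trans (Finset.filter_subset _ _)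
  have hvan₀ : ∀ l ∈ J₀, ∑ k ∈ range (p ^ n), (c k : ℂ) * primRoot (p ^ l) ^ k = 0 := by
    intro l hl
    rw [← hSc]
    exact (mem_filter.mp (hJ₀sub hl)).2
  obtain ⟨hle1, hHN⟩ := keyC p hp n J₀ hJ₀Icc c hsupp (by rw [hsumc, hJ₀card]) hvan₀
  constructor
  · intro j j' hjj'
    rw [Finset.disjoint_left]
    intro x hxj hxj'
    rw [hΩj j, mem_filter] at hxj
    rw [hΩj j', mem_filter] at hxj'
    have h2 : 1 < c x.val := by
      simp only [hcdef]
      refine Finset.one_lt_card.mpr ⟨(x, j), ?_, (x, j'), ?_, ?_⟩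
      · exact mem_filter.mpr ⟨hxj.2, rfl⟩
      · exact mem_filter.mpr ⟨hxj'.2, rfl⟩
      · intro h
        exact hjj' (congrArg Prod.snd h)
    have h3 := hle1 x.val
    omega
  · refine ⟨J₀.image (fun l => l - 1), hHN.1, ?_⟩
    have hCN : (Finset.univ.biUnion Ωj).image ZMod.val
        = (range (p ^ n)).filter (fun k => c k ≠ 0) := by
      ext k
      simp only [mem_image, mem_biUnion, mem_filter, mem_range, mem_univ, true_and]
      constructor
      · rintro ⟨x, ⟨j, hj⟩, rfl⟩
        rw [hΩj j, mem_filter] at hj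
        refine ⟨ZMod.val_lt _, ?_⟩
        simp only [hcdef]
        intro h0
        have h1 : (x, j) ∈ Ω.filter (fun w : ZMod (p ^ n) × ZMod q => w.1.val = x.val) :=
          mem_filter.mpr ⟨hj.2, rfl⟩
        rw [Finset.card_eq_zero.mp h0] at h1
        exact absurd h1 (Finset.notMem_empty _)
      · rintro ⟨hk, hck⟩
        simp only [hcdef] at hck
        obtain ⟨w, hw⟩ := Finset.card_pos.mp (Nat.pos_of_ne_zero hck)
        rw [mem_filter] at hw
        refine ⟨w.1, ⟨w.2, ?_⟩, hw.2⟩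
        rw [hΩj w.2, mem_filter]
        exact ⟨mem_univ _, by rw [Prod.mk.eta]; exact hw.1⟩
    intro i hi x hx
    have hxval : x.val ∈ (range (p ^ n)).filter (fun k => c k ≠ 0) := by
      rw [← hCN]
      exact mem_image_of_mem _ hx
    have htrans : ((Finset.univ.biUnion Ωj).filter
          (fun y => y.val % p ^ i = x.val % p ^ i)).image (fun y => y.val % p ^ (i + 1))
        = (((range (p ^ n)).filter (fun k => c k ≠ 0)).filter
            (fun y => y % p ^ i = x.val % p ^ i)).image (fun y => y % p ^ (i + 1)) := by
      rw [← hCN, Finset.filter_image, Finset.image_image]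
      rfl
    rw [htrans]
    exact hHN.2 i hi x.val hxval
end
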